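/- arXiv:2206.10347 — 6 statements merged into one kernel-verified Lean document; each statement's English description precedes it below -/
import Mathlib

section
/- For a set-valued mapping F between metric spaces and a point (x̄,ȳ) in its graph, the regularity modulus of F at (x̄,ȳ) equals the reciprocal of the Lipschitz modulus of F⁻¹ at (ȳ,x̄); that is, rg F(x̄,ȳ) = (lip F⁻¹(ȳ,x̄))⁻¹ (with the convention 1/∞ = 0 and 1/0 = ∞). -/
open EMetric ENNReal Set

variable {X Y : Type*} [MetricSpace X] [MetricSpace Y]

/-- The inverse of a set-valued mapping. -/
def svInv (F : X → Set Y) (y : Y) : Set X := {x | y ∈ F x}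

/-- The (metric) regularity modulus of `F` at `(xb, yb)`: the supremum of all `α`
such that `α · d(x, F⁻¹(y)) ≤ d(y, F(x))` for all `(x, y)` near `(xb, yb)`. -/
noncomputable def rgMod (F : X → Set Y) (xb : X) (yb : Y) : ℝ≥0∞ :=
  sSup {α : ℝ≥0∞ | ∃ δ : ℝ≥0∞, 0 < δ ∧ ∀ x y, edist x xb < δ → edist y yb < δ →
    α * infEdist x (svInv F y) ≤ infEdist y (F x)}

/-- The Lipschitz modulus of `F⁻¹` at `(yb, xb)`: the infimum of all `α`
such that `d(x, F⁻¹(y)) ≤ α · d(y, y')` for all `y, y'` near `yb` and `x ∈ F⁻¹(y')` near `xb`. -/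
noncomputable def lipModInv (F : X → Set Y) (xb : X) (yb : Y) : ℝ≥0∞ :=
  sInf {α : ℝ≥0∞ | ∃ δ : ℝ≥0∞, 0 < δ ∧ ∀ y y' x, edist y yb < δ → edist y' yb < δ →
    x ∈ svInv F y' → edist x xb < δ →
    infEdist x (svInv F y) ≤ α * edist y y'}

/-!
If `α · d(x, F⁻¹ y) ≤ d(y, F x)` near `(x̄, ȳ)`, then for `x ∈ F⁻¹ y'` we have `d(y, F x) ≤ d(y, y')`,
so `α⁻¹` is a Lipschitz constant of `F⁻¹`. Conversely, let `α` be a Lipschitz constant of `F⁻¹`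
and `β α < 1`. If `d(y, F x)` is small, it is approximated by `d(y, y')` with `y' ∈ F x` close
to `ȳ`, and `β d(x, F⁻¹ y) ≤ β α d(y, y') ≤ d(y, y')`. If `d(y, F x)` is not small, then
`d(x, F⁻¹ y) ≤ d(x, x̄) + α d(y, ȳ)` (using `x̄ ∈ F⁻¹ ȳ`) is, once `(x, y)` is close enough.
-/

theorem Metric.le_infEDist_of_infEDist_lt {Z : Type*} [PseudoEMetricSpace Z] {z : Z}
    {s : Set Z} {c t : ℝ≥0∞} (hs : infEDist z s < t)
    (h : ∀ w ∈ s, edist z w < t → c ≤ edist z w) : c ≤ infEDist z s := by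
  refine le_of_forall_gt_imp_ge_of_dense fun r hr => ?_
  obtain ⟨w, hw, hzw⟩ := infEDist_lt_iff.mp (lt_min hr hs)
  exact (h w hw (hzw.trans_le (min_le_right _ _))).trans (hzw.trans_le (min_le_left _ _)).le

namespace SetValued

open Metric

def HasRegularityConstant (F : X → Set Y) (xb : X) (yb : Y) (α : ℝ≥0∞) : Prop :=
  ∃ δ : ℝ≥0∞, 0 < δ ∧ ∀ x y, edist x xb < δ → edist y yb < δ →
    α * infEDist x (svInv F y) ≤ infEDist y (F x)

def HasInvLipschitzConstant (F : X → Set Y) (xb : X) (yb : Y) (α : ℝ≥0∞) : Prop :=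
  ∃ δ : ℝ≥0∞, 0 < δ ∧ ∀ y y' x, edist y yb < δ → edist y' yb < δ →
    x ∈ svInv F y' → edist x xb < δ →
    infEDist x (svInv F y) ≤ α * edist y y'

variable {F : X → Set Y} {xb : X} {yb : Y} {α β : ℝ≥0∞}

theorem HasRegularityConstant.hasInvLipschitzConstant_inv
    (hα : HasRegularityConstant F xb yb α) : HasInvLipschitzConstant F xb yb α⁻¹ := by
  obtain ⟨δ, hδ, hreg⟩ := hα
  refine ⟨δ, hδ, fun y y' x hy _ hx hxδ => ?_⟩
  rcases eq_or_ne y y' with rfl | hyy'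
  · exact (infEDist_zero_of_mem hx).trans_le zero_le
  have hdist : α * infEDist x (svInv F y) ≤ edist y y' :=
    (hreg x y hxδ hy).trans (infEDist_le_edist_of_mem hx)
  rw [mul_comm, ← div_eq_mul_inv, ENNReal.le_div_iff_mul_le (.inr (edist_pos.mpr hyy').ne')
    (.inr (edist_ne_top y y')), mul_comm]
  exact hdist

theorem HasInvLipschitzConstant.hasRegularityConstant (h : yb ∈ F xb)
    (hα : HasInvLipschitzConstant F xb yb α) (hβ : β < α⁻¹) :
    HasRegularityConstant F xb yb β := by
  obtain ⟨δ, hδ, hlip⟩ := hα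
  have hβα : β * α < 1 := ENNReal.mul_lt_of_lt_div (by rwa [one_div])
  have hc : β * (α + 1) ≠ ∞ := by
    rw [mul_add, mul_one]
    exact add_ne_top.mpr ⟨hβα.ne_top, hβ.ne_top⟩
  set η := δ / 2
  have hη : 0 < η := ENNReal.half_pos hδ.ne'
  have hηδ : η ≤ δ := ENNReal.half_le_self
  refine ⟨min η (η / (β * (α + 1))), lt_min hη (ENNReal.div_pos hη.ne' hc),
    fun x y hx hy => ?_⟩
  have hxδ : edist x xb < δ := (hx.trans_le (min_le_left _ _)).trans_le hηδ
  have hyη : edist y yb < η := hy.trans_le (min_le_left _ _)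
  have hyδ : edist y yb < δ := hyη.trans_le hηδ
  rcases lt_or_ge (infEDist y (F x)) η with hnear | hfar
  · refine le_infEDist_of_infEDist_lt hnear fun y' hy' hyy' => ?_
    have hy'δ : edist y' yb < δ := calc
      edist y' yb ≤ edist y y' + edist y yb := edist_triangle_left _ _ _
      _ < η + η := ENNReal.add_lt_add hyy' hyη
      _ = δ := ENNReal.add_halves δ
    calc β * infEDist x (svInv F y)
        ≤ β * (α * edist y y') := by gcongr; exact hlip y y' x hyδ hy'δ hy' hxδ
      _ = β * α * edist y y' := (mul_assoc _ _ _).symm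
      _ ≤ edist y y' := mul_le_of_le_one_left' hβα.le
  · have hxb : infEDist xb (svInv F y) ≤ α * edist y yb := by
      simpa using hlip y yb xb hyδ (by simpa using hδ) h (by simpa using hδ)
    have hsmall : β * (α + 1) * min η (η / (β * (α + 1))) ≤ η :=
      (mul_le_mul_right (min_le_right _ _) _).trans ENNReal.mul_div_le
    calc β * infEDist x (svInv F y)
        ≤ β * (α * edist y yb + edist x xb) := by
          rw [add_comm]
          gcongr
          exact infEDist_le_infEDist_add_edist.trans (by rw [add_comm]; gcongr)
      _ ≤ β * (α + 1) * min η (η / (β * (α + 1))) := by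
          rw [mul_assoc, add_mul, one_mul]
          gcongr
      _ ≤ infEDist y (F x) := hsmall.trans hfar

end SetValued

/-- The regularity modulus of `F` at `(xb, yb)` equals the reciprocal of the Lipschitz
modulus of `F⁻¹` at `(yb, xb)` (with conventions `1/∞ = 0`, `1/0 = ∞`). -/
theorem rgMod_eq_inv_lipModInv (F : X → Set Y) (xb : X) (yb : Y) (h : yb ∈ F xb) :
    rgMod F xb yb = (lipModInv F xb yb)⁻¹ := by
  change sSup {α | SetValued.HasRegularityConstant F xb yb α} =
    (sInf {α | SetValued.HasInvLipschitzConstant F xb yb α})⁻¹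
  apply le_antisymm
  · refine sSup_le fun α hα => ENNReal.le_inv_iff_le_inv.mpr ?_
    exact sInf_le hα.hasInvLipschitzConstant_inv
  · refine le_of_forall_lt_imp_le_of_dense fun β hβ => le_sSup ?_
    obtain ⟨α, hα, hαβ⟩ := sInf_lt_iff.mp (ENNReal.lt_inv_iff_lt_inv.mp hβ)
    exact hα.hasRegularityConstant h (ENNReal.lt_inv_iff_lt_inv.mp hαβ)
end

section
/- Let F : X ⇉ Y be a set-valued mapping between normed spaces, f : X → Y Fréchet differentiable at x̄, (x̄,ȳ) ∈ gph F, and ε ≥ 0. Set ε₁ := ε/(‖∇f(x̄)‖+1) and ε₂ := (‖∇f(x̄)‖+1)ε. Then for every y* ∈ Y*: D*_{ε₁} F(x̄,ȳ)(y*) ⊆ D*_ε(F+f)(x̄, ȳ+f(x̄))(y*) − ∇f(x̄)* y* ⊆ D*_{ε₂} F(x̄,ȳ)(y*). -/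
/-!
The shear `(x, y) ↦ (x, y + f x)` maps `gph F` onto `gph (F + f)`. Near `xb`, with
`f x - f xb = A (x - xb) + o(‖x - xb‖)`, it changes the sum-norm distance to the base point by at
most the factor `‖A‖ + 1 + o(1)`, and it changes the pairing with `(x*, -y*)` into the pairing
with `(x* + y* ∘ A, -y*)` up to `o(‖x - xb‖)`. This gives the first inclusion; the second is the
first one applied to `F + f` and `-f`, whose sum is `F` again.
-/

open Metric Set

variable {X Y : Type*} [NormedAddCommGroup X] [NormedSpace ℝ X]
  [NormedAddCommGroup Y] [NormedSpace ℝ Y]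

/-- The Fréchet `ε`-coderivative of `F` at `(xb, yb) ∈ gph F` (sum norm on `X × Y`):
`x* ∈ D*_ε F(xb,yb)(y*)` iff `(x*, −y*)` is a Fréchet `ε`-normal to the graph. -/
def epsCoderiv (ε : ℝ) (F : X → Set Y) (xb : X) (yb : Y) (ys : Y →L[ℝ] ℝ) :
    Set (X →L[ℝ] ℝ) :=
  {xs | ∀ η > 0, ∃ δ > 0, ∀ x y, y ∈ F x → ‖x - xb‖ + ‖y - yb‖ < δ →
    xs (x - xb) - ys (y - yb) ≤ (ε + η) * (‖x - xb‖ + ‖y - yb‖)}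

/-- The sum `F + f` of a set-valued mapping and a single-valued function. -/
def addFun (F : X → Set Y) (f : X → Y) : X → Set Y := fun x => {z | z - f x ∈ F x}

omit [NormedAddCommGroup X] [NormedSpace ℝ X] [NormedSpace ℝ Y] in
lemma addFun_addFun_neg (F : X → Set Y) (f : X → Y) : addFun (addFun F f) (-f) = F := by
  funext x; ext z; simp [addFun]

section Remainder

variable {B : X →L[ℝ] Y} {u : X} {w : Y} {γ : ℝ}

lemma norm_le_of_norm_sub_clm_le (h : ‖w - B u‖ ≤ γ * ‖u‖) : ‖w‖ ≤ (‖B‖ + γ) * ‖u‖ :=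
  calc ‖w‖ = ‖B u + (w - B u)‖ := by rw [add_sub_cancel]
    _ ≤ ‖B‖ * ‖u‖ + γ * ‖u‖ := norm_add_le_of_le (B.le_opNorm u) h
    _ = (‖B‖ + γ) * ‖u‖ := by ring

lemma apply_clm_sub_le_of_norm_sub_clm_le (ys : Y →L[ℝ] ℝ) (h : ‖w - B u‖ ≤ γ * ‖u‖) :
    ys (B u) - ys w ≤ ‖ys‖ * (γ * ‖u‖) :=
  calc ys (B u) - ys w = ys (B u - w) := (map_sub ys _ _).symm
    _ ≤ ‖ys‖ * ‖B u - w‖ := (le_abs_self _).trans (ys.le_opNorm _)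
    _ ≤ ‖ys‖ * (γ * ‖u‖) := by rw [norm_sub_rev]; gcongr

end Remainder

lemma add_comp_mem_epsCoderiv_addFun {G : X → Set Y} {g : X → Y} {xb : X} {cb : Y}
    {B : X →L[ℝ] Y} (hg : HasFDerivAt g B xb) {e : ℝ} (he : 0 ≤ e) {ys : Y →L[ℝ] ℝ}
    {v : X →L[ℝ] ℝ} (hv : v ∈ epsCoderiv e G xb cb ys) :
    v + ys.comp B ∈ epsCoderiv (e * (‖B‖ + 1)) (addFun G g) xb (cb + g xb) ys := by
  intro η hη
  -- one small `t` serves both as the slack in `hv` and as the remainder constant of `g`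
  obtain ⟨t, ht, htη⟩ : ∃ t > 0, (e + t) * (‖B‖ + 1 + t) + ‖ys‖ * t < e * (‖B‖ + 1) + η := by
    have hc : Continuous fun t : ℝ => (e + t) * (‖B‖ + 1 + t) + ‖ys‖ * t := by fun_prop
    exact ((hc.tendsto 0).eventually (gt_mem_nhds (by simpa using hη))).exists_gt
  obtain ⟨δ₀, hδ₀, hvδ₀⟩ := hv t ht
  obtain ⟨r, hr, hrem⟩ := Metric.eventually_nhds_iff.mp (hg.isLittleO.def ht)
  have hK : 0 < ‖B‖ + 1 + t := by positivity
  refine ⟨min (δ₀ / (‖B‖ + 1 + t)) r, lt_min (div_pos hδ₀ hK) hr, fun x z hz hxz => ?_⟩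
  set a := ‖x - xb‖
  set b := ‖z - (cb + g xb)‖
  have hb : 0 ≤ b := norm_nonneg _
  have hab : a + b < δ₀ / (‖B‖ + 1 + t) := hxz.trans_le (min_le_left _ _)
  have hgx : ‖g x - g xb - B (x - xb)‖ ≤ t * a := by
    refine hrem ?_
    rw [dist_eq_norm]
    linarith [hxz.trans_le (min_le_right _ _)]
  have hdist : a + ‖z - g x - cb‖ ≤ (‖B‖ + 1 + t) * (a + b) := by
    have hshift : z - g x - cb = (z - (cb + g xb)) - (g x - g xb) := by abel
    calc a + ‖z - g x - cb‖ ≤ a + (b + (‖B‖ + t) * a) := by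
          rw [hshift]; gcongr
          exact (norm_sub_le _ _).trans (add_le_add_right (norm_le_of_norm_sub_clm_le hgx) _)
      _ ≤ (‖B‖ + 1 + t) * (a + b) := by nlinarith [mul_nonneg (add_nonneg (norm_nonneg B) ht.le) hb]
  have hsplit : ys (z - (cb + g xb)) = ys (z - g x - cb) + ys (g x - g xb) := by
    rw [← map_add]; congr 1; abel
  calc (v + ys.comp B) (x - xb) - ys (z - (cb + g xb))
      = (v (x - xb) - ys (z - g x - cb)) + (ys (B (x - xb)) - ys (g x - g xb)) := by
        rw [hsplit]; simp only [add_apply, ContinuousLinearMap.comp_apply]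
        ring
    _ ≤ (e + t) * (a + ‖z - g x - cb‖) + ‖ys‖ * (t * a) := by
        gcongr
        · refine hvδ₀ x _ hz (hdist.trans_lt ?_)
          rwa [lt_div_iff₀' hK] at hab
        · exact apply_clm_sub_le_of_norm_sub_clm_le ys hgx
    _ ≤ (e + t) * ((‖B‖ + 1 + t) * (a + b)) + ‖ys‖ * (t * (a + b)) := by
        gcongr; exact le_add_of_nonneg_right (norm_nonneg _)
    _ = ((e + t) * (‖B‖ + 1 + t) + ‖ys‖ * t) * (a + b) := by ring
    _ ≤ (e * (‖B‖ + 1) + η) * (a + b) := by gcongr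

theorem epsCoderiv_addFun_general (F : X → Set Y) (f : X → Y) (xb : X) (yb : Y)
    (A : X →L[ℝ] Y) (hf : HasFDerivAt f A xb)
    (ε : ℝ) (hε : 0 ≤ ε) (ys : Y →L[ℝ] ℝ) :
    epsCoderiv (ε / (‖A‖ + 1)) F xb yb ys ⊆
      {w | w + ys.comp A ∈ epsCoderiv ε (addFun F f) xb (yb + f xb) ys} ∧
    {w | w + ys.comp A ∈ epsCoderiv ε (addFun F f) xb (yb + f xb) ys} ⊆
      epsCoderiv ((‖A‖ + 1) * ε) F xb yb ys := by
  constructor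
  · intro w hw
    have h := add_comp_mem_epsCoderiv_addFun hf (by positivity) hw
    rwa [div_mul_cancel₀ ε (by positivity)] at h
  · intro w hw
    have h := add_comp_mem_epsCoderiv_addFun hf.neg hε hw
    rwa [ContinuousLinearMap.comp_neg, add_neg_cancel_right, addFun_addFun_neg, Pi.neg_apply,
      add_neg_cancel_right, norm_neg, mul_comm] at h

/-- Theorem 2.3: `ε`-coderivatives of `F + f` for `f` Fréchet differentiable at `xb`,
where `ε₁ = ε/(‖∇f(xb)‖+1)` and `ε₂ = (‖∇f(xb)‖+1)ε`:
`D*_{ε₁}F(xb,yb)(y*) ⊆ D*_ε(F+f)(xb,yb+f(xb))(y*) − ∇f(xb)*y* ⊆ D*_{ε₂}F(xb,yb)(y*)`. -/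
theorem epsCoderiv_addFun (F : X → Set Y) (f : X → Y) (xb : X) (yb : Y)
    (hyb : yb ∈ F xb) (A : X →L[ℝ] Y) (hf : HasFDerivAt f A xb)
    (ε : ℝ) (hε : 0 ≤ ε) (ys : Y →L[ℝ] ℝ) :
    epsCoderiv (ε / (‖A‖ + 1)) F xb yb ys ⊆
      {w | w + ys.comp A ∈ epsCoderiv ε (addFun F f) xb (yb + f xb) ys} ∧
    {w | w + ys.comp A ∈ epsCoderiv ε (addFun F f) xb (yb + f xb) ys} ⊆
      epsCoderiv ((‖A‖ + 1) * ε) F xb yb ys :=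
  epsCoderiv_addFun_general F f xb yb A hf ε hε ys
end

section
/- Let F : X ⇉ Y between normed spaces, f : X → Y, (x̄,ȳ) ∈ gph F, ε ≥ 0, and suppose f is calm at x̄ with c := clm f(x̄) < 1. Then for all y* ∈ Y* and x* ∈ D*_ε F(x̄,ȳ)(y*), one has x* ∈ D*_δ (F+f)(x̄, ȳ+f(x̄))(y*) with δ := (ε + c‖y*‖)/(1−c). -/
/-!
Write a point of the graph of `F + f` as `(x, y + f x)` with `y ∈ F x`. Near `x̄` calmness gives
`‖f x - f x̄‖ ≤ k ‖x - x̄‖` for every `k > c`, so the increments `(x - x̄, y - ȳ)` and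
`(x - x̄, y + f x - ȳ - f x̄)` differ by at most `k ‖x - x̄‖`, while `y*` changes by at most
`‖y*‖ k ‖x - x̄‖`. The `ε`-estimate for `F` therefore becomes an estimate for `F + f` with
constant `ε (1 + c) + c ‖y*‖`, which is at most `(ε + c ‖y*‖) / (1 - c)` because
`1 + c ≤ 1 / (1 - c)`.
-/

open Metric Set Filter Topology ENNReal

variable {X Y : Type*} [NormedAddCommGroup X] [NormedSpace ℝ X]
  [NormedAddCommGroup Y] [NormedSpace ℝ Y]

/-- The calmness modulus of `f` at `xb`. -/
noncomputable def clmMod (f : X → Y) (xb : X) : ℝ≥0∞ :=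
  Filter.limsup (fun x => edist (f x) (f xb) / edist x xb) (𝓝[≠] xb)

variable {F : X → Set Y} {xb : X} {yb : Y} {ys : Y →L[ℝ] ℝ} {xs : X →L[ℝ] ℝ}

theorem epsCoderiv_mono {ε ε' : ℝ} (h : ε ≤ ε') :
    epsCoderiv ε F xb yb ys ⊆ epsCoderiv ε' F xb yb ys := by
  intro xs hxs η hη
  obtain ⟨δ, hδ, hF⟩ := hxs η hη
  refine ⟨δ, hδ, fun x y hy hxy => (hF x y hy hxy).trans ?_⟩
  gcongr

theorem mem_epsCoderiv_of_forall_lt {ε : ℝ} (h : ∀ ε' > ε, xs ∈ epsCoderiv ε' F xb yb ys) :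
    xs ∈ epsCoderiv ε F xb yb ys := by
  intro η hη
  obtain ⟨δ, hδ, hF⟩ := h (ε + η / 2) (by linarith) (η / 2) (by linarith)
  refine ⟨δ, hδ, fun x y hy hxy => (hF x y hy hxy).trans_eq ?_⟩
  ring

omit [NormedSpace ℝ X] [NormedSpace ℝ Y] in
theorem eventually_norm_sub_le_of_clmMod_lt {f : X → Y} {k : ℝ}
    (h : clmMod f xb < ENNReal.ofReal k) :
    ∀ᶠ x in 𝓝 xb, ‖f x - f xb‖ ≤ k * ‖x - xb‖ := by
  have hk : 0 ≤ k := ENNReal.ofReal_pos.1 (h.trans_le' bot_le) |>.le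
  filter_upwards [eventually_nhdsWithin_iff.1 (eventually_lt_of_limsup_lt h)] with x hx
  rcases eq_or_ne x xb with rfl | hne
  · simp
  have hslope := (ENNReal.div_lt_iff (Or.inl (edist_pos.2 hne).ne') (Or.inl (edist_ne_top _ _))).1
    (hx hne)
  rw [edist_dist x, ← ENNReal.ofReal_mul hk] at hslope
  rw [← dist_eq_norm, ← dist_eq_norm]
  exact (edist_le_ofReal (by positivity)).1 hslope.le

theorem sub_map_add_le_of_sub_map_le {p : X} {v w : Y} {a k : ℝ} (ha : 0 ≤ a) (hk : 0 ≤ k)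
    (h : xs p - ys v ≤ a * (‖p‖ + ‖v‖)) (hw : ‖w‖ ≤ k * ‖p‖) :
    xs p - ys (v + w) ≤ (a * (1 + k) + ‖ys‖ * k) * (‖p‖ + ‖v + w‖) := by
  have hv : ‖v‖ ≤ ‖v + w‖ + k * ‖p‖ := by
    have := norm_sub_le (v + w) w
    rw [add_sub_cancel_right] at this
    linarith
  have hysw : -ys w ≤ ‖ys‖ * (k * ‖p‖) :=
    (neg_le_abs _).trans ((ys.le_opNorm w).trans (mul_le_mul_of_nonneg_left hw (norm_nonneg _)))
  have hcoef : a ≤ a * (1 + k) + ‖ys‖ * k := by nlinarith [norm_nonneg ys]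
  calc xs p - ys (v + w) = (xs p - ys v) - ys w := by rw [map_add]; ring
    _ ≤ a * (‖p‖ + (‖v + w‖ + k * ‖p‖)) + ‖ys‖ * (k * ‖p‖) := by
      linarith [mul_le_mul_of_nonneg_left hv ha]
    _ = (a * (1 + k) + ‖ys‖ * k) * ‖p‖ + a * ‖v + w‖ := by ring
    _ ≤ (a * (1 + k) + ‖ys‖ * k) * (‖p‖ + ‖v + w‖) := by
      linarith [mul_le_mul_of_nonneg_right hcoef (norm_nonneg (v + w))]

theorem epsCoderiv_addFun_of_eventually_norm_sub_le {f : X → Y} {ε k : ℝ} (hε : 0 ≤ ε)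
    (hk : 0 ≤ k) (hf : ∀ᶠ x in 𝓝 xb, ‖f x - f xb‖ ≤ k * ‖x - xb‖)
    (hxs : xs ∈ epsCoderiv ε F xb yb ys) :
    xs ∈ epsCoderiv (ε * (1 + k) + ‖ys‖ * k) (addFun F f) xb (yb + f xb) ys := by
  intro η hη
  obtain ⟨r, hr, hfr⟩ := Metric.eventually_nhds_iff.1 hf
  obtain ⟨δ, hδ, hF⟩ := hxs (η / (1 + k)) (by positivity)
  refine ⟨min r (δ / (1 + k)), by positivity, fun x z hz hxz => ?_⟩
  have hxr : ‖f x - f xb‖ ≤ k * ‖x - xb‖ := hfr <| by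
    rw [dist_eq_norm]
    linarith [norm_nonneg (z - (yb + f xb)), min_le_left r (δ / (1 + k))]
  have hincr : z - (yb + f xb) = (z - f x - yb) + (f x - f xb) := by abel
  have hsmall : ‖x - xb‖ + ‖z - f x - yb‖ < δ := by
    have hv : ‖z - f x - yb‖ ≤ ‖z - (yb + f xb)‖ + k * ‖x - xb‖ := by
      rw [show z - f x - yb = z - (yb + f xb) - (f x - f xb) by abel]
      exact (norm_sub_le _ _).trans (by gcongr)
    have hxzδ := hxz.trans_le (min_le_right _ _)
    rw [lt_div_iff₀ (by positivity)] at hxzδ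
    nlinarith [norm_nonneg (x - xb), norm_nonneg (z - (yb + f xb))]
  have key := sub_map_add_le_of_sub_map_le (by positivity) hk (hF x (z - f x) hz hsmall) hxr
  rw [← hincr] at key
  refine key.trans_eq ?_
  field_simp
  ring

theorem epsCoderiv_addFun_of_clmMod_le {f : X → Y} {ε c : ℝ} (hε : 0 ≤ ε) (hc : 0 ≤ c)
    (hclm : clmMod f xb ≤ ENNReal.ofReal c) (hxs : xs ∈ epsCoderiv ε F xb yb ys) :
    xs ∈ epsCoderiv (ε * (1 + c) + ‖ys‖ * c) (addFun F f) xb (yb + f xb) ys := by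
  refine mem_epsCoderiv_of_forall_lt fun ε' hε' => ?_
  have hcont : Continuous fun k : ℝ => ε * (1 + k) + ‖ys‖ * k := by fun_prop
  have hnear : ∀ᶠ k in 𝓝[>] c, ε * (1 + k) + ‖ys‖ * k < ε' :=
    ((hcont.tendsto c).eventually (gt_mem_nhds hε')).filter_mono nhdsWithin_le_nhds
  obtain ⟨k, hkε', hck⟩ := (hnear.and self_mem_nhdsWithin).exists
  have hcalm := eventually_norm_sub_le_of_clmMod_lt
    (hclm.trans_lt ((ENNReal.ofReal_lt_ofReal_iff (hc.trans_lt hck)).2 hck))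
  exact epsCoderiv_mono hkε'.le
    (epsCoderiv_addFun_of_eventually_norm_sub_le hε (hc.trans hck.le) hcalm hxs)

theorem epsCoderiv_addFun_calm_general (F : X → Set Y) (f : X → Y) (xb : X) (yb : Y)
    (ε : ℝ) (hε : 0 ≤ ε)
    (c : ℝ) (hc0 : 0 ≤ c) (hc1 : c < 1) (hclm : clmMod f xb = ENNReal.ofReal c)
    (ys : Y →L[ℝ] ℝ) (xs : X →L[ℝ] ℝ) (hxs : xs ∈ epsCoderiv ε F xb yb ys) :
    xs ∈ epsCoderiv ((ε + c * ‖ys‖) / (1 - c)) (addFun F f) xb (yb + f xb) ys := by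
  refine epsCoderiv_mono ?_ (epsCoderiv_addFun_of_clmMod_le hε hc0 hclm.le hxs)
  rw [le_div_iff₀ (by linarith)]
  nlinarith [mul_nonneg (mul_nonneg hc0 hc0) (add_nonneg hε (norm_nonneg ys))]

/-- Lemma 2.6: if `f` is calm at `xb` with modulus `c < 1`, then any
`x* ∈ D*_ε F(xb,yb)(y*)` belongs to `D*_δ (F+f)(xb, yb+f(xb))(y*)`
with `δ = (ε + c‖y*‖)/(1−c)`. -/
theorem epsCoderiv_addFun_calm (F : X → Set Y) (f : X → Y) (xb : X) (yb : Y)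
    (hyb : yb ∈ F xb) (ε : ℝ) (hε : 0 ≤ ε)
    (c : ℝ) (hc0 : 0 ≤ c) (hc1 : c < 1) (hclm : clmMod f xb = ENNReal.ofReal c)
    (ys : Y →L[ℝ] ℝ) (xs : X →L[ℝ] ℝ) (hxs : xs ∈ epsCoderiv ε F xb yb ys) :
    xs ∈ epsCoderiv ((ε + c * ‖ys‖) / (1 - c)) (addFun F f) xb (yb + f xb) ys :=
  epsCoderiv_addFun_calm_general F f xb yb ε hε c hc0 hc1 hclm ys xs hxs
end

section
/- Let f : X → Y be a function between normed spaces and x̄ ∈ X. Suppose the directional derivatives f'(x; x−x̄) and f'(x; x̄−x) exist for all x ≠ x̄ near x̄, and lim_{x̄≠x→x̄} max{‖f(x)−f(x̄)−f'(x;x−x̄)‖, ‖f(x)−f(x̄)+f'(x;x̄−x)‖} / ‖(f(x)−f(x̄), x−x̄)‖ = 0. Then f is semismooth* at x̄ (i.e., its graph is semismooth* at (x̄, f(x̄))). -/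
/-!
Let `p` be a unit-norm Fréchet `δ`-normal to the graph of `f` at a point `x ≠ xb` near `xb`.
Testing the normal inequality along the rays `t ↦ x + t (x - xb)` and `t ↦ x + t (xb - x)` and
letting `t ↓ 0` gives `⟨p, (v, f'(x; v))⟩ ≤ δ ‖(v, f'(x; v))‖` for `v = ±(x - xb)`. The limit
hypothesis says that `f x - f xb` is `f'(x; x - xb)` and `-f'(x; xb - x)` up to an error that is
small compared with `‖(x - xb, f x - f xb)‖`, so both inequalities transfer, with that error, to
`±⟨p, (x - xb, f x - f xb)⟩`.
-/

open Metric Set Filter Topology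

variable {X Y : Type*} [NormedAddCommGroup X] [NormedSpace ℝ X]
  [NormedAddCommGroup Y] [NormedSpace ℝ Y]

/-- The set of Fréchet `δ`-normals to the graph of `f : X → Y` at `(x, f x)`,
with the sum norm on `X × Y` and pairs of functionals (max norm) as the dual. -/
def graphEpsNormal (δ : ℝ) (f : X → Y) (x : X) :
    Set ((X →L[ℝ] ℝ) × (Y →L[ℝ] ℝ)) :=
  {p | ∀ η > 0, ∃ ρ > 0, ∀ u, ‖u - x‖ + ‖f u - f x‖ < ρ →
    p.1 (u - x) + p.2 (f u - f x) ≤ (δ + η) * (‖u - x‖ + ‖f u - f x‖)}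

/-- `f` is semismooth* at `xb`: its graph is semismooth* at `(xb, f xb)`. -/
def SemismoothStarFun (f : X → Y) (xb : X) : Prop :=
  ∀ ε > (0:ℝ), ∃ δ > (0:ℝ), ∀ x, ‖x - xb‖ + ‖f x - f xb‖ < δ →
    ∀ p ∈ graphEpsNormal δ f x, max ‖p.1‖ ‖p.2‖ = 1 →
      |p.1 (x - xb) + p.2 (f x - f xb)| ≤ ε * (‖x - xb‖ + ‖f x - f xb‖)

theorem le_mul_of_forall_pos_le_add_mul {a δ c : ℝ} (h : ∀ η > 0, a ≤ (δ + η) * c) :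
    a ≤ δ * c := by
  have hlim : Tendsto (fun η => (δ + η) * c) (𝓝[>] 0) (𝓝 (δ * c)) := by
    simpa using ((tendsto_const_nhds.add tendsto_id).mul tendsto_const_nhds).mono_left
      (nhdsWithin_le_nhds (a := (0 : ℝ)))
  exact ge_of_tendsto hlim (eventually_nhdsWithin_of_forall h)

section GraphNormal

variable {δ : ℝ} {f : X → Y} {x : X} {p : (X →L[ℝ] ℝ) × (Y →L[ℝ] ℝ)}

theorem eventually_le_of_mem_graphEpsNormal (hp : p ∈ graphEpsNormal δ f x) {η : ℝ}
    (hη : 0 < η) {α : Type*} {l : Filter α} {u : α → X}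
    (hu : Tendsto (fun a => ‖u a - x‖ + ‖f (u a) - f x‖) l (𝓝 0)) :
    ∀ᶠ a in l, p.1 (u a - x) + p.2 (f (u a) - f x) ≤
      (δ + η) * (‖u a - x‖ + ‖f (u a) - f x‖) := by
  obtain ⟨ρ, hρ, hle⟩ := hp η hη
  filter_upwards [hu (Iio_mem_nhds hρ)] with a ha using hle _ ha

theorem apply_add_apply_le_add_mul_of_mem_graphEpsNormal (hp : p ∈ graphEpsNormal δ f x)
    {v : X} {d : Y} (hd : Tendsto (fun t : ℝ => t⁻¹ • (f (x + t • v) - f x)) (𝓝[>] 0) (𝓝 d))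
    {η : ℝ} (hη : 0 < η) :
    p.1 v + p.2 d ≤ (δ + η) * (‖v‖ + ‖d‖) := by
  set g : ℝ → Y := fun t => t⁻¹ • (f (x + t • v) - f x)
  have hfg : ∀ t > (0 : ℝ), f (x + t • v) - f x = t • g t := fun t ht => by
    simp only [g, smul_smul, mul_inv_cancel₀ ht.ne', one_smul]
  have hnorm : ∀ t > (0 : ℝ),
      ‖x + t • v - x‖ + ‖f (x + t • v) - f x‖ = t * (‖v‖ + ‖g t‖) := fun t ht => by
    rw [add_sub_cancel_left, hfg t ht, norm_smul, norm_smul, Real.norm_of_nonneg ht.le, mul_add]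
  have hsmall :
      Tendsto (fun t : ℝ => ‖x + t • v - x‖ + ‖f (x + t • v) - f x‖) (𝓝[>] 0) (𝓝 0) := by
    have hlim : Tendsto (fun t : ℝ => t * (‖v‖ + ‖g t‖)) (𝓝[>] 0) (𝓝 (0 * (‖v‖ + ‖d‖))) :=
      (tendsto_id.mono_left nhdsWithin_le_nhds).mul (tendsto_const_nhds.add hd.norm)
    rw [zero_mul] at hlim
    exact hlim.congr' (eventually_nhdsWithin_of_forall fun t ht => (hnorm t ht).symm)
  have hev : ∀ᶠ t in 𝓝[>] (0 : ℝ), p.1 v + p.2 (g t) ≤ (δ + η) * (‖v‖ + ‖g t‖) := by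
    filter_upwards [eventually_le_of_mem_graphEpsNormal hp hη hsmall, self_mem_nhdsWithin]
      with t ht (htpos : 0 < t)
    rw [hnorm t htpos, add_sub_cancel_left, hfg t htpos, map_smul, map_smul, smul_eq_mul,
      smul_eq_mul, ← mul_add, mul_left_comm] at ht
    exact le_of_mul_le_mul_left ht htpos
  exact le_of_tendsto_of_tendsto (tendsto_const_nhds.add ((p.2.continuous.tendsto d).comp hd))
    (tendsto_const_nhds.mul (tendsto_const_nhds.add hd.norm)) hev

theorem apply_add_apply_le_of_mem_graphEpsNormal (hp : p ∈ graphEpsNormal δ f x) {v : X}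
    {d : Y} (hd : Tendsto (fun t : ℝ => t⁻¹ • (f (x + t • v) - f x)) (𝓝[>] 0) (𝓝 d)) :
    p.1 v + p.2 d ≤ δ * (‖v‖ + ‖d‖) :=
  le_mul_of_forall_pos_le_add_mul fun _ hη =>
    apply_add_apply_le_add_mul_of_mem_graphEpsNormal hp hd hη

end GraphNormal

section NormalInequality

variable {q : Y →L[ℝ] ℝ} {δ m : ℝ}

theorem add_apply_le_of_norm_sub_le (hq : ‖q‖ ≤ 1) (hδ : 0 ≤ δ) {a s : ℝ} {y d : Y}
    (h : a + q d ≤ δ * (s + ‖d‖)) (hyd : ‖y - d‖ ≤ m) :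
    a + q y ≤ δ * (s + ‖y‖ + m) + m := by
  have hqy : q y ≤ q d + m := by
    have := (le_abs_self _).trans ((q.le_of_opNorm_le hq (y - d)).trans_eq (one_mul _))
    rw [map_sub] at this
    linarith
  have hd : ‖d‖ ≤ ‖y‖ + m := (norm_le_norm_add_norm_sub y d).trans (by linarith)
  nlinarith

theorem abs_apply_add_apply_le (hq : ‖q‖ ≤ 1) (hδ : 0 ≤ δ) {ℓ : X →L[ℝ] ℝ} {v : X}
    {y d₁ d₂ : Y} (h₁ : ℓ v + q d₁ ≤ δ * (‖v‖ + ‖d₁‖))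
    (h₂ : ℓ (-v) + q d₂ ≤ δ * (‖-v‖ + ‖d₂‖)) (hm₁ : ‖y - d₁‖ ≤ m) (hm₂ : ‖y + d₂‖ ≤ m) :
    |ℓ v + q y| ≤ δ * (‖v‖ + ‖y‖ + m) + m := by
  have hup := add_apply_le_of_norm_sub_le hq hδ h₁ hm₁
  have hdown := add_apply_le_of_norm_sub_le (m := m) (y := -y) hq hδ h₂
    (by rwa [← neg_add', norm_neg])
  simp only [map_neg, norm_neg] at hdown
  exact abs_le.mpr ⟨by linarith, hup⟩

end NormalInequality

/-- Proposition 3.5: if the directional derivatives `f'(x; x−xb)` and `f'(x; xb−x)` exist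
for all `x ≠ xb` near `xb` and the stated limit condition holds, then `f` is
semismooth* at `xb`. -/
theorem semismoothStarFun_of_dirDeriv (f : X → Y) (xb : X) (d₁ d₂ : X → Y)
    (δ₀ : ℝ) (hδ₀ : 0 < δ₀)
    (hd : ∀ x, x ≠ xb → ‖x - xb‖ < δ₀ →
      Tendsto (fun t : ℝ => t⁻¹ • (f (x + t • (x - xb)) - f x)) (𝓝[>] 0) (𝓝 (d₁ x)) ∧
      Tendsto (fun t : ℝ => t⁻¹ • (f (x + t • (xb - x)) - f x)) (𝓝[>] 0) (𝓝 (d₂ x)))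
    (hlim : Tendsto
      (fun x => max ‖f x - f xb - d₁ x‖ ‖f x - f xb + d₂ x‖ / (‖f x - f xb‖ + ‖x - xb‖))
      (𝓝[≠] xb) (𝓝 0)) :
    SemismoothStarFun f xb := by
  intro ε hε
  obtain ⟨δ₁, hδ₁, hnear⟩ := Metric.mem_nhdsWithin_iff.mp
    (inter_mem (mem_nhdsWithin_of_mem_nhds (ball_mem_nhds xb hδ₀))
      (hlim (Iio_mem_nhds (by positivity : 0 < ε / 4))))
  -- with `m < ε r / 4`, `δ ≤ 1` and `δ ≤ ε / 2` make the final bound `δ (r + m) + m ≤ ε r`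
  refine ⟨min δ₁ (min 1 (ε / 2)), by positivity, fun x hx p hp hp1 => ?_⟩
  rcases eq_or_ne x xb with rfl | hne
  · simp
  set r := ‖x - xb‖ + ‖f x - f xb‖
  set m := max ‖f x - f xb - d₁ x‖ ‖f x - f xb + d₂ x‖
  have hr : 0 < r :=
    add_pos_of_pos_of_nonneg (norm_pos_iff.mpr (sub_ne_zero.mpr hne)) (norm_nonneg _)
  have hxδ : ‖x - xb‖ < min δ₁ (min 1 (ε / 2)) := by linarith [norm_nonneg (f x - f xb)]
  obtain ⟨hx₀, hmr⟩ := @hnear x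
    ⟨mem_ball_iff_norm.mpr (hxδ.trans_le (min_le_left _ _)), hne⟩
  rw [mem_ball_iff_norm] at hx₀
  rw [mem_preimage, mem_Iio, add_comm ‖f x - f xb‖, div_lt_iff₀ hr] at hmr
  obtain ⟨hT₁, hT₂⟩ := hd x hne hx₀
  rw [← neg_sub x xb] at hT₂
  have hbound := abs_apply_add_apply_le (y := f x - f xb) (hp1 ▸ le_max_right _ _)
    (by positivity) (apply_add_apply_le_of_mem_graphEpsNormal hp hT₁)
    (apply_add_apply_le_of_mem_graphEpsNormal hp hT₂) (le_max_left _ _) (le_max_right _ _)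
  have hδ1 : min δ₁ (min 1 (ε / 2)) ≤ 1 := (min_le_right _ _).trans (min_le_left _ _)
  have hδε : min δ₁ (min 1 (ε / 2)) ≤ ε / 2 := (min_le_right _ _).trans (min_le_right _ _)
  have hm : 0 ≤ m := (norm_nonneg _).trans (le_max_left _ _)
  refine hbound.trans ?_
  nlinarith [mul_le_mul_of_nonneg_right hδε hr.le, mul_le_mul_of_nonneg_right hδ1 hm]
end

section
/- If a function f : X → Y between normed spaces is positively homogeneous at x̄ ∈ X, i.e., f(x̄ + λ(x − x̄)) = f(x̄) + λ(f(x) − f(x̄)) for all x ∈ X and λ > 0, then f is semismooth* at x̄. -/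
open Metric Set Filter Topology

variable {X Y : Type*} [NormedAddCommGroup X] [NormedSpace ℝ X]
  [NormedAddCommGroup Y] [NormedSpace ℝ Y]

/-! A positively homogeneous function is affine along every ray from `xb`, so near any point `x`
the graph contains a segment through `(x, f x)` in the direction `±(x - xb, f x - f xb)`.
A Fréchet `δ`-normal at `(x, f x)` therefore pairs with this direction to at most
`δ · ‖(x - xb, f x - f xb)‖` in absolute value, which is semismoothness* with `δ = ε`. -/

theorem graphEpsNormal_apply_le_of_eventually_nhdsGT {δ : ℝ} {f : X → Y} {x : X}
    {p : (X →L[ℝ] ℝ) × (Y →L[ℝ] ℝ)} (hp : p ∈ graphEpsNormal δ f x) {v : X} {w : Y}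
    (hline : ∀ᶠ s in 𝓝[>] (0 : ℝ), f (x + s • v) = f x + s • w) :
    p.1 v + p.2 w ≤ δ * (‖v‖ + ‖w‖) := by
  set M := ‖v‖ + ‖w‖
  have hM : 0 ≤ M := by positivity
  refine le_of_forall_pos_le_add fun c hc => ?_
  -- the slack `η = c / (M + 1)` costs at most `c` once multiplied by `M`
  have hη : 0 < c / (M + 1) := by positivity
  obtain ⟨ρ, hρ, hnormal⟩ := hp _ hη
  have hsmall : ∀ᶠ s in 𝓝[>] (0 : ℝ), s * M < ρ := by
    refine nhdsWithin_le_nhds (((continuous_id.mul continuous_const).tendsto' 0 0 ?_).eventually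
      (gt_mem_nhds hρ))
    simp
  obtain ⟨s, hs, hfs, hsM⟩ := (eventually_mem_nhdsWithin.and (hline.and hsmall)).exists
  have hdist : ‖s • v‖ + ‖s • w‖ = s * M := by
    rw [norm_smul, norm_smul, Real.norm_of_nonneg hs.le]; ring
  have hstep := hnormal (x + s • v) (by rw [hfs]; simpa [hdist] using hsM)
  simp only [hfs, add_sub_cancel_left, map_smul, smul_eq_mul, hdist] at hstep
  calc p.1 v + p.2 w ≤ (δ + c / (M + 1)) * M := le_of_mul_le_mul_left (by linarith) hs
    _ = δ * M + c * (M / (M + 1)) := by ring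
    _ ≤ δ * M + c * 1 := by gcongr; exact div_le_one_of_le₀ (by linarith) (by positivity)
    _ = δ * M + c := by ring

theorem abs_graphEpsNormal_apply_le_of_eventually_nhds {δ : ℝ} {f : X → Y} {x : X}
    {p : (X →L[ℝ] ℝ) × (Y →L[ℝ] ℝ)} (hp : p ∈ graphEpsNormal δ f x) {v : X} {w : Y}
    (hline : ∀ᶠ s in 𝓝 (0 : ℝ), f (x + s • v) = f x + s • w) :
    |p.1 v + p.2 w| ≤ δ * (‖v‖ + ‖w‖) := by
  have hneg : ∀ᶠ s in 𝓝 (0 : ℝ), f (x + s • -v) = f x + s • -w := by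
    simpa only [smul_neg, neg_smul] using
      (continuous_neg.tendsto' (0 : ℝ) 0 neg_zero).eventually hline
  have hle := graphEpsNormal_apply_le_of_eventually_nhdsGT hp (nhdsWithin_le_nhds hline)
  have hge := graphEpsNormal_apply_le_of_eventually_nhdsGT hp (nhdsWithin_le_nhds hneg)
  simp only [map_neg, norm_neg] at hge
  exact abs_le.mpr ⟨by linarith, hle⟩

theorem eventually_affine_along_ray_of_posHomogeneous {f : X → Y} {xb : X}
    (hph : ∀ (x : X) (lam : ℝ), 0 < lam →
      f (xb + lam • (x - xb)) = f xb + lam • (f x - f xb)) (x : X) :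
    ∀ᶠ s in 𝓝 (0 : ℝ), f (x + s • (x - xb)) = f x + s • (f x - f xb) := by
  filter_upwards [Ioi_mem_nhds (show (-1 : ℝ) < 0 by norm_num)] with s hs
  have hray : x + s • (x - xb) = xb + (1 + s) • (x - xb) := by module
  rw [hray, hph x (1 + s) (by linarith [mem_Ioi.mp hs])]
  module

/-- Corollary 3.6: a function positively homogeneous at `xb` is semismooth* at `xb`. -/
theorem semismoothStarFun_of_posHomogeneous (f : X → Y) (xb : X)
    (hph : ∀ (x : X) (lam : ℝ), 0 < lam →
      f (xb + lam • (x - xb)) = f xb + lam • (f x - f xb)) :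
    SemismoothStarFun f xb := fun ε hε =>
  ⟨ε, hε, fun x _ _ hp _ => abs_graphEpsNormal_apply_le_of_eventually_nhds hp
    (eventually_affine_along_ray_of_posHomogeneous hph x)⟩
end

section
/- Let X, Y be Banach spaces and F : X ⇉ Y be strongly subregular at (x̄,ȳ) ∈ gph F. Then the radius of strong subregularity with respect to calm perturbations equals the subregularity modulus: rad[sSR]_{clm}F(x̄,ȳ) = srg F(x̄,ȳ); moreover the same value is attained over the smaller classes of firmly calm and firmly calm semismooth* perturbations. -/
open Metric Set ENNReal NNReal EMetric Filter Topology

variable {X Y : Type*} [NormedAddCommGroup X] [NormedSpace ℝ X]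
  [NormedAddCommGroup Y] [NormedSpace ℝ Y]

/-- `F` is (metrically) subregular at `(xb, yb)`. -/
def Subregular (F : X → Set Y) (xb : X) (yb : Y) : Prop :=
  ∃ α : ℝ≥0, 0 < α ∧ ∃ δ > (0:ℝ), ∀ x, ‖x - xb‖ < δ →
    (α : ℝ≥0∞) * infEdist x (svInv F yb) ≤ infEdist yb (F x)

/-- `F` is strongly subregular at `(xb, yb)`: subregular and `xb` is an isolated point
of `F⁻¹(yb)`. -/
def StronglySubregular (F : X → Set Y) (xb : X) (yb : Y) : Prop :=
  Subregular F xb yb ∧ ∃ δ > (0:ℝ), ∀ x ∈ svInv F yb, ‖x - xb‖ < δ → x = xb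

/-- The subregularity modulus: supremum of admissible `α`. -/
noncomputable def srgMod (F : X → Set Y) (xb : X) (yb : Y) : ℝ≥0∞ :=
  sSup {α : ℝ≥0∞ | ∃ δ > (0:ℝ), ∀ x, ‖x - xb‖ < δ →
    α * infEdist x (svInv F yb) ≤ infEdist yb (F x)}

/-- `f` is calm at `xb`. -/
def Calm (f : X → Y) (xb : X) : Prop := clmMod f xb < ⊤

/-- `f` is firmly calm at `xb`: calm at `xb` and Lipschitz continuous around every
`x ≠ xb` near `xb`. -/
def FirmlyCalm (f : X → Y) (xb : X) : Prop :=
  Calm f xb ∧ ∃ δ > (0:ℝ), ∀ x, x ≠ xb → ‖x - xb‖ < δ →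
    ∃ (K : ℝ≥0) (ρ : ℝ), 0 < ρ ∧ LipschitzOnWith K f (ball x ρ)

/-- The radius of strong subregularity of `F` at `(xb, yb)` with respect to
perturbations from a class `P`, vanishing at `xb`, measured by the calmness modulus. -/
noncomputable def radsSR (P : (X → Y) → Prop) (F : X → Set Y) (xb : X) (yb : Y) : ℝ≥0∞ :=
  sInf {r : ℝ≥0∞ | ∃ f : X → Y, P f ∧ f xb = 0 ∧
    ¬ StronglySubregular (addFun F f) xb yb ∧ r = clmMod f xb}

/-!
Lower bound: if `clm f (xb) < srg F (xb, yb)`, pick `clm f < γ₁ < γ₂ < α` with `α` an admissible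
subregularity constant. Since `xb` is isolated in `F⁻¹ yb`, `d(x, F⁻¹ yb) = ‖x - xb‖` near `xb`, so
`d(yb, (F + f) x) ≥ d(yb, F x) - ‖f x‖ ≥ (γ₂ - γ₁) ‖x - xb‖`, and this linear growth makes `F + f`
strongly subregular.

Upper bound: for `c > srg F (xb, yb)` there are `x_k → xb` and `y_k ∈ F x_k` with
`‖yb - y_k‖ < c ‖x_k - xb‖`, chosen so that the gaps between the scales `ℓ_k = log ‖x_k - xb‖`
grow linearly. Let `U` interpolate the values `w_k = (yb - y_k) / ‖x_k - xb‖` at the nodes `ℓ_k`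
piecewise affinely and put `f x = ‖x - xb‖ • U (log ‖x - xb‖)`. Then `yb - f x_k = y_k`, so `xb`
is not isolated in `(F + f)⁻¹ yb`, while `‖f x‖ ≤ c ‖x - xb‖`. Since `U` is bounded and
`1`-Lipschitz, `f` is Lipschitz. Along the ray from `xb` through `x`, `f` is positively homogeneous
up to a term of the size of the slope of `U` near `log ‖x - xb‖`, and these slopes tend to `0` as
the gaps grow; testing a Fréchet normal `(x*, y*)` in both directions of the ray therefore makes
`x* (x - xb) + y* (f x)` small, which is semismoothness*.
-/

section

omit [NormedSpace ℝ X] [NormedSpace ℝ Y]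

lemma eventually_infEDist_eq_edist {α : Type*} [PseudoMetricSpace α] {s : Set α} {a : α}
    (ha : a ∈ s) {δ : ℝ} (hδ : 0 < δ) (hiso : ∀ z ∈ s, dist z a < δ → z = a) :
    ∀ᶠ x in 𝓝 a, infEDist x s = edist x a := by
  filter_upwards [ball_mem_nhds a (half_pos hδ)] with x hx
  refine le_antisymm (infEDist_le_edist_of_mem ha) (le_infEDist.2 fun z hz => ?_)
  by_cases hza : dist z a < δ
  · rw [hiso z hz hza]
  · rw [Metric.mem_ball] at hx
    rw [edist_dist, edist_dist]
    exact ENNReal.ofReal_le_ofReal (by linarith [dist_triangle_left z a x])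

lemma eventually_edist_le_of_clmMod_lt {f : X → Y} {xb : X} {γ : ℝ≥0∞}
    (h : clmMod f xb < γ) : ∀ᶠ x in 𝓝 xb, edist (f x) (f xb) ≤ γ * edist x xb := by
  filter_upwards [eventually_nhdsWithin_iff.1 (eventually_lt_of_limsup_lt h)] with x hx
  rcases eq_or_ne x xb with rfl | hne
  · simp
  exact (ENNReal.div_le_iff (edist_pos.2 hne).ne' (edist_ne_top x xb)).1 (hx hne).le

omit [NormedAddCommGroup X] in
lemma infEDist_addFun (F : X → Set Y) (f : X → Y) (x : X) (y : Y) :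
    infEDist y (addFun F f x) = infEDist (y - f x) (F x) := by
  have hset : addFun F f x = (· + f x) '' F x := by
    rw [Set.image_add_right]
    ext z
    simp [addFun, sub_eq_add_neg]
  rw [hset, ← infEDist_image (isometry_add_right (f x)) (x := y - f x), sub_add_cancel]

lemma stronglySubregular_of_eventually_mul_edist_le {G : X → Set Y} {xb : X} {yb : Y}
    (hmem : yb ∈ G xb) {β : ℝ≥0} (hβ : 0 < β)
    (h : ∀ᶠ x in 𝓝 xb, β * edist x xb ≤ infEDist yb (G x)) :
    StronglySubregular G xb yb := by
  obtain ⟨δ, hδ, hδx⟩ := Metric.eventually_nhds_iff.1 h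
  have hδx' : ∀ x, ‖x - xb‖ < δ → β * edist x xb ≤ infEDist yb (G x) := fun x hx =>
    hδx (by rwa [dist_eq_norm])
  refine ⟨⟨β, hβ, δ, hδ, fun x hx => ?_⟩, δ, hδ, fun x hx hxδ => ?_⟩
  · calc (β : ℝ≥0∞) * infEDist x (svInv G yb) ≤ β * edist x xb := by
          gcongr; exact infEDist_le_edist_of_mem hmem
      _ ≤ infEDist yb (G x) := hδx' x hx
  · have h0 : (β : ℝ≥0∞) * edist x xb = 0 :=
      nonpos_iff_eq_zero.1 ((hδx' x hxδ).trans (infEDist_zero_of_mem (show yb ∈ G x from hx)).le)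
    simpa [hβ.ne'] using h0

lemma not_stronglySubregular_of_tendsto {G : X → Set Y} {xb : X} {yb : Y} {x : ℕ → X}
    (hmem : ∀ k, x k ∈ svInv G yb) (hne : ∀ k, x k ≠ xb) (hx : Tendsto x atTop (𝓝 xb)) :
    ¬ StronglySubregular G xb yb := by
  rintro ⟨-, δ, hδ, hiso⟩
  obtain ⟨k, hk⟩ := (hx.eventually (ball_mem_nhds xb hδ)).exists
  exact hne k (hiso _ (hmem k) (by rwa [← dist_eq_norm]))

lemma clmMod_le_of_norm_le {f : X → Y} {xb : X} {T : ℝ≥0} (hf0 : f xb = 0)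
    (h : ∀ x, ‖f x‖ ≤ T * ‖x - xb‖) : clmMod f xb ≤ T := by
  refine limsup_le_of_le (h := Eventually.of_forall fun x => ENNReal.div_le_of_le_mul ?_)
  rw [hf0, edist_zero_right, edist_eq_enorm_sub, ← ofReal_norm, ← ofReal_norm,
    ← ENNReal.ofReal_coe_nnreal, ← ENNReal.ofReal_mul T.coe_nonneg]
  exact ENNReal.ofReal_le_ofReal (h x)

lemma frequently_exists_dist_lt_of_srgMod_lt {F : X → Set Y} {xb : X} {yb : Y} (h : yb ∈ F xb)
    {c : ℝ≥0} (hc : srgMod F xb yb < c) :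
    ∃ᶠ x in 𝓝[≠] xb, ∃ y ∈ F x, dist yb y < c * dist x xb := by
  by_contra hfreq
  obtain ⟨δ, hδ, hδx⟩ := Metric.eventually_nhds_iff.1
    (eventually_nhdsWithin_iff.1 (not_frequently.1 hfreq))
  refine hc.not_ge (le_sSup ⟨δ, hδ, fun x hx => ?_⟩)
  rcases eq_or_ne x xb with rfl | hne
  · have h0 : infEDist x (svInv F yb) = 0 := infEDist_zero_of_mem h
    exact (mul_eq_zero_of_right _ h0).trans_le zero_le
  calc (c : ℝ≥0∞) * infEDist x (svInv F yb) ≤ c * edist x xb := by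
        gcongr
        exact infEDist_le_edist_of_mem h
    _ ≤ infEDist yb (F x) := le_infEDist.2 fun y hy => by
        have : c * dist x xb ≤ dist yb y :=
          not_lt.1 fun hlt => hδx (by rwa [dist_eq_norm]) hne ⟨y, hy, hlt⟩
        rwa [edist_nndist, edist_nndist, ← ENNReal.coe_mul, ENNReal.coe_le_coe,
          ← NNReal.coe_le_coe, NNReal.coe_mul, coe_nndist, coe_nndist]

lemma exists_seq_norm_sub_lt_mul {xb : X} {P : X → Prop} (hP : ∃ᶠ x in 𝓝[≠] xb, P x)
    {g : ℕ → ℝ} (hg : ∀ k, 0 < g k) :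
    ∃ x : ℕ → X, (∀ k, x k ≠ xb ∧ P (x k)) ∧ ∀ k, ‖x (k + 1) - xb‖ < g k * ‖x k - xb‖ := by
  have hsmall : ∀ ε : ℝ, 0 < ε → ∃ z, (P z ∧ z ≠ xb) ∧ dist z xb < ε := fun ε hε =>
    ((frequently_nhdsWithin_iff.1 hP).and_eventually (ball_mem_nhds xb hε)).exists
  choose! pick hpick hpick_lt using hsmall
  let x : ℕ → X := fun k => Nat.rec (pick 1) (fun k z => pick (g k * ‖z - xb‖)) k
  have hx : ∀ k, x k ≠ xb ∧ P (x k) := by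
    intro k
    induction k with
    | zero => exact (hpick 1 one_pos).symm
    | succ k ih =>
      exact (hpick _ (mul_pos (hg k) (norm_pos_iff.2 (sub_ne_zero.2 ih.1)))).symm
  refine ⟨x, hx, fun k => ?_⟩
  rw [← dist_eq_norm]
  exact hpick_lt _ (mul_pos (hg k) (norm_pos_iff.2 (sub_ne_zero.2 (hx k).1)))

lemma exists_eventually_mul_edist_le_infEDist_addFun {F : X → Set Y} {xb : X} {yb : Y}
    {f : X → Y} (h : yb ∈ F xb)
    (hiso : ∃ δ > (0:ℝ), ∀ x ∈ svInv F yb, ‖x - xb‖ < δ → x = xb) (hf0 : f xb = 0)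
    (hlt : clmMod f xb < srgMod F xb yb) :
    ∃ β : ℝ≥0, 0 < β ∧ ∀ᶠ x in 𝓝 xb, β * edist x xb ≤ infEDist yb (addFun F f x) := by
  obtain ⟨α, ⟨δ, hδ, hα⟩, hclmα⟩ := lt_sSup_iff.1 hlt
  obtain ⟨γ₂, hclm₂, h₂α⟩ := ENNReal.lt_iff_exists_nnreal_btwn.1 hclmα
  obtain ⟨γ₁, hclm₁, h₁₂⟩ := ENNReal.lt_iff_exists_nnreal_btwn.1 hclm₂
  obtain ⟨δ₀, hδ₀, hiso⟩ := hiso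
  have hαx : ∀ᶠ x in 𝓝 xb, α * infEDist x (svInv F yb) ≤ infEDist yb (F x) :=
    Metric.eventually_nhds_iff.2 ⟨δ, hδ, fun x hx => hα x (by rwa [← dist_eq_norm])⟩
  have hisox : ∀ᶠ x in 𝓝 xb, infEDist x (svInv F yb) = edist x xb :=
    eventually_infEDist_eq_edist h hδ₀ fun z hz hzδ => hiso z hz (by rwa [← dist_eq_norm])
  refine ⟨γ₂ - γ₁, tsub_pos_of_lt (ENNReal.coe_lt_coe.1 h₁₂), ?_⟩
  filter_upwards [hαx, hisox, eventually_edist_le_of_clmMod_lt hclm₁] with x hαx hisox hfx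
  rw [ENNReal.coe_sub, ENNReal.sub_mul fun _ _ => edist_ne_top x xb, tsub_le_iff_right]
  calc (γ₂ : ℝ≥0∞) * edist x xb ≤ α * infEDist x (svInv F yb) := by
        rw [hisox]; gcongr
    _ ≤ infEDist yb (F x) := hαx
    _ ≤ infEDist (yb - f x) (F x) + edist yb (yb - f x) := infEDist_le_infEDist_add_edist
    _ = infEDist yb (addFun F f x) + edist (f x) (f xb) := by
        rw [infEDist_addFun, hf0, edist_comm (f x), ← edist_sub_left yb 0 (f x), sub_zero]
    _ ≤ infEDist yb (addFun F f x) + γ₁ * edist x xb := by gcongr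

lemma stronglySubregular_addFun_of_clmMod_lt {F : X → Set Y} {xb : X} {yb : Y}
    {f : X → Y} (h : yb ∈ F xb)
    (hiso : ∃ δ > (0:ℝ), ∀ x ∈ svInv F yb, ‖x - xb‖ < δ → x = xb) (hf0 : f xb = 0)
    (hlt : clmMod f xb < srgMod F xb yb) :
    StronglySubregular (addFun F f) xb yb := by
  obtain ⟨β, hβ, hgrowth⟩ := exists_eventually_mul_edist_le_infEDist_addFun h hiso hf0 hlt
  exact stronglySubregular_of_eventually_mul_edist_le (by simpa [addFun, hf0] using h) hβ hgrowth

lemma srgMod_le_radsSR {F : X → Set Y} {xb : X} {yb : Y} (h : yb ∈ F xb)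
    (hiso : ∃ δ > (0:ℝ), ∀ x ∈ svInv F yb, ‖x - xb‖ < δ → x = xb) (P : (X → Y) → Prop) :
    srgMod F xb yb ≤ radsSR P F xb yb :=
  le_sInf fun _ ⟨_, _, hf0, hnss, hr⟩ =>
    hr ▸ not_lt.1 fun hlt => hnss (stronglySubregular_addFun_of_clmMod_lt h hiso hf0 hlt)

end

lemma tendsto_atBot_of_succ_add_one_le {ℓ : ℕ → ℝ} (h : ∀ k, ℓ (k + 1) + 1 ≤ ℓ k) :
    Tendsto ℓ atTop atBot := by
  have hle : ∀ k : ℕ, ℓ k ≤ ℓ 0 + -k := by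
    intro k
    induction k with
    | zero => simp
    | succ k ih => push_cast; linarith [h k]
  exact tendsto_atBot_mono hle (tendsto_atBot_add_const_left _ _
    (tendsto_neg_atTop_atBot.comp tendsto_natCast_atTop_atTop))

lemma succ_add_one_le_of_gap {ℓ : ℕ → ℝ} {T : ℝ} (hT : 0 ≤ T)
    (hgap : ∀ k, ℓ (k + 1) + (k + 1) * (2 * T + 1) ≤ ℓ k) (k : ℕ) : ℓ (k + 1) + 1 ≤ ℓ k := by
  have : (1 : ℝ) ≤ (k + 1) * (2 * T + 1) :=
    one_le_mul_of_one_le_of_one_le (by simp) (by linarith)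
  linarith [hgap k]

lemma exists_mem_Ico_of_tendsto_atBot {ℓ : ℕ → ℝ} (hℓ : Tendsto ℓ atTop atBot) {t : ℝ}
    (ht : t < ℓ 0) : ∃ k, t ∈ Ico (ℓ (k + 1)) (ℓ k) := by
  obtain ⟨k, hk, hk₁⟩ := Nat.exists_not_and_succ_of_not_zero_of_exists (p := fun k => ℓ k ≤ t)
    (not_le.2 ht) (hℓ.eventually (eventually_le_atBot t)).exists
  exact ⟨k, hk₁, not_le.1 hk⟩

lemma exists_mem_Ioc_of_tendsto_atBot {ℓ : ℕ → ℝ} (hℓ : Tendsto ℓ atTop atBot) {t : ℝ}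
    (ht : t ≤ ℓ 0) : ∃ k, t ∈ Ioc (ℓ (k + 1)) (ℓ k) := by
  obtain ⟨k, hk, hk₁⟩ := Nat.exists_not_and_succ_of_not_zero_of_exists (p := fun k => ℓ k < t)
    (not_lt.2 ht) (hℓ.eventually (eventually_lt_atBot t)).exists
  exact ⟨k, hk₁, not_lt.1 hk⟩

section LocallyAffine

variable {U : ℝ → Y} {ε t : ℝ}

def LocallyAffineAt (U : ℝ → Y) (ε t : ℝ) : Prop :=
  (∃ a b : Y, ‖b‖ ≤ ε ∧ ∀ᶠ m in 𝓝[≤] t, U m = a + m • b) ∧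
    ∃ a b : Y, ‖b‖ ≤ ε ∧ ∀ᶠ m in 𝓝[≥] t, U m = a + m • b

lemma hasDerivAt_add_smul (a b : Y) (m : ℝ) : HasDerivAt (fun m : ℝ => a + m • b) b m := by
  simpa using ((hasDerivAt_id m).smul_const b).const_add a

lemma LocallyAffineAt.continuousAt (h : LocallyAffineAt U ε t) : ContinuousAt U t := by
  obtain ⟨⟨a, b, -, hl⟩, ⟨a', b', -, hr⟩⟩ := h
  exact continuousAt_iff_continuous_left_right.2
    ⟨(hasDerivAt_add_smul a b t).continuousAt.continuousWithinAt.congr_of_eventuallyEq hl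
        (hl.self_of_nhdsWithin self_mem_Iic),
      (hasDerivAt_add_smul a' b' t).continuousAt.continuousWithinAt.congr_of_eventuallyEq hr
        (hr.self_of_nhdsWithin self_mem_Ici)⟩

lemma LocallyAffineAt.exists_hasDerivWithinAt_Ici (h : LocallyAffineAt U ε t) :
    ∃ b : Y, ‖b‖ ≤ ε ∧ HasDerivWithinAt U b (Ici t) t := by
  obtain ⟨-, a, b, hb, hr⟩ := h
  exact ⟨b, hb, (hasDerivAt_add_smul a b t).hasDerivWithinAt.congr_of_eventuallyEq hr
    (hr.self_of_nhdsWithin self_mem_Ici)⟩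

lemma lipschitzWith_of_forall_locallyAffineAt {K : ℝ≥0} (h : ∀ t, LocallyAffineAt U K t) :
    LipschitzWith K U := by
  choose b hb hderiv using fun t => (h t).exists_hasDerivWithinAt_Ici
  refine LipschitzWith.of_dist_le_mul fun t₁ t₂ => ?_
  wlog h₁₂ : t₁ ≤ t₂ generalizing t₁ t₂
  · rw [dist_comm, dist_comm t₁]
    exact this t₂ t₁ (le_of_not_ge h₁₂)
  have := norm_image_sub_le_of_norm_deriv_right_le_segment
    (fun s _ => (h s).continuousAt.continuousWithinAt) (fun s _ => hderiv s) (fun s _ => hb s)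
    t₂ ⟨h₁₂, le_rfl⟩
  rw [← dist_eq_norm] at this
  rwa [dist_comm, Real.dist_eq, abs_sub_comm, abs_of_nonneg (sub_nonneg.2 h₁₂)]

end LocallyAffine

section LinInterp

variable (ℓ : ℕ → ℝ) (w : ℕ → Y)

noncomputable def linInterpSlope (k : ℕ) : Y := (ℓ (k + 1) - ℓ k)⁻¹ • (w (k + 1) - w k)

noncomputable def linInterpPiece (k : ℕ) (t : ℝ) : Y := w k + (t - ℓ k) • linInterpSlope ℓ w k

/-- For decreasing `ℓ`, the `sInf` is the index `k` of the piece `[ℓ (k + 1), ℓ k)` containing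
`t`. -/
noncomputable def linInterp (t : ℝ) : Y :=
  if ℓ 0 ≤ t then w 0 else linInterpPiece ℓ w (sInf {k | ℓ (k + 1) ≤ t}) t

variable {ℓ w} {T : ℝ}

lemma linInterpPiece_self (k : ℕ) : linInterpPiece ℓ w k (ℓ k) = w k := by
  simp [linInterpPiece]

lemma linInterpPiece_succ {k : ℕ} (h : ℓ (k + 1) ≠ ℓ k) :
    linInterpPiece ℓ w k (ℓ (k + 1)) = w (k + 1) := by
  rw [linInterpPiece, linInterpSlope, smul_inv_smul₀ (sub_ne_zero.2 h), add_sub_cancel]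

lemma linInterpPiece_eq_add_smul (k : ℕ) (t : ℝ) :
    linInterpPiece ℓ w k t = (w k - ℓ k • linInterpSlope ℓ w k) + t • linInterpSlope ℓ w k := by
  rw [linInterpPiece, sub_smul]
  abel

lemma norm_linInterpPiece_le (hw : ∀ k, ‖w k‖ ≤ T) {k : ℕ} (hk : ℓ (k + 1) < ℓ k) {t : ℝ}
    (ht : t ∈ Icc (ℓ (k + 1)) (ℓ k)) : ‖linInterpPiece ℓ w k t‖ ≤ T := by
  have hθ : (t - ℓ k) / (ℓ (k + 1) - ℓ k) ∈ Icc (0:ℝ) 1 := by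
    rw [← neg_div_neg_eq, neg_sub, neg_sub]
    exact ⟨div_nonneg (by linarith [ht.2]) (by linarith),
      div_le_one_of_le₀ (by linarith [ht.1]) (by linarith)⟩
  have := (convex_closedBall (0 : Y) T).add_smul_sub_mem (x := w k) (y := w (k + 1))
    (by simpa using hw k) (by simpa using hw (k + 1)) hθ
  rw [linInterpPiece, linInterpSlope, smul_smul, ← div_eq_mul_inv]
  simpa using this

lemma norm_linInterpSlope_le (hw : ∀ k, ‖w k‖ ≤ T)
    (hgap : ∀ k, ℓ (k + 1) + (k + 1) * (2 * T + 1) ≤ ℓ k) (k : ℕ) :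
    ‖linInterpSlope ℓ w k‖ ≤ 1 / (k + 1) := by
  have hT : 0 ≤ T := (norm_nonneg _).trans (hw 0)
  have hgk := hgap k
  have hΔ : ‖w (k + 1) - w k‖ ≤ 2 * T := (norm_sub_le _ _).trans (by linarith [hw k, hw (k + 1)])
  have hpos : 0 < ((k : ℝ) + 1) * (2 * T + 1) := by positivity
  rw [linInterpSlope, norm_smul, norm_inv, Real.norm_eq_abs, abs_sub_comm,
    abs_of_pos (by linarith), inv_mul_le_iff₀ (by linarith), mul_one_div,
    le_div_iff₀ (by positivity)]
  nlinarith

lemma linInterp_of_le {t : ℝ} (h : ℓ 0 ≤ t) : linInterp ℓ w t = w 0 := if_pos h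

lemma linInterp_eq_piece_of_mem_Ico (hℓ : Antitone ℓ) {k : ℕ} {t : ℝ}
    (ht : t ∈ Ico (ℓ (k + 1)) (ℓ k)) : linInterp ℓ w t = linInterpPiece ℓ w k t := by
  have hk : sInf {j | ℓ (j + 1) ≤ t} = k := by
    refine le_antisymm (Nat.sInf_le ht.1) (le_csInf ⟨k, ht.1⟩ fun j hj => ?_)
    by_contra! hjk
    exact absurd ((hℓ (Nat.succ_le_of_lt hjk)).trans hj) (not_le.2 ht.2)
  rw [linInterp, if_neg (not_le.2 (ht.2.trans_le (hℓ (Nat.zero_le k)))), hk]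

lemma linInterp_eq_piece (hℓ : ∀ k, ℓ (k + 1) < ℓ k) {k : ℕ} {t : ℝ}
    (ht : t ∈ Icc (ℓ (k + 1)) (ℓ k)) : linInterp ℓ w t = linInterpPiece ℓ w k t := by
  have hanti : Antitone ℓ := antitone_nat_of_succ_le fun k => (hℓ k).le
  rcases ht.2.lt_or_eq with hlt | rfl
  · exact linInterp_eq_piece_of_mem_Ico hanti ⟨ht.1, hlt⟩
  rw [linInterpPiece_self]
  cases k with
  | zero => exact linInterp_of_le le_rfl
  | succ j =>
    rw [linInterp_eq_piece_of_mem_Ico hanti ⟨le_rfl, hℓ j⟩, linInterpPiece_succ (hℓ j).ne]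

lemma linInterp_apply_nat (hℓ : ∀ k, ℓ (k + 1) < ℓ k) (k : ℕ) : linInterp ℓ w (ℓ k) = w k := by
  rw [linInterp_eq_piece hℓ ⟨(hℓ k).le, le_rfl⟩, linInterpPiece_self]

lemma locallyAffineAt_linInterp (hℓ : ∀ k, ℓ (k + 1) < ℓ k) (hlim : Tendsto ℓ atTop atBot)
    {ε t : ℝ} (hε : 0 ≤ ε)
    (hslope : ∀ k, t ∈ Icc (ℓ (k + 1)) (ℓ k) → ‖linInterpSlope ℓ w k‖ ≤ ε) :
    LocallyAffineAt (linInterp ℓ w) ε t := by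
  have hpiece : ∀ k, ∀ m ∈ Icc (ℓ (k + 1)) (ℓ k),
      linInterp ℓ w m = (w k - ℓ k • linInterpSlope ℓ w k) + m • linInterpSlope ℓ w k :=
    fun k m hm => by rw [linInterp_eq_piece hℓ hm, linInterpPiece_eq_add_smul]
  constructor
  · rcases lt_or_ge (ℓ 0) t with h0 | h0
    · refine ⟨w 0, 0, by simpa using hε, ?_⟩
      filter_upwards [nhdsWithin_le_nhds (Ioi_mem_nhds h0)] with m hm
      simp [linInterp_of_le (le_of_lt hm)]
    · obtain ⟨k, hk⟩ := exists_mem_Ioc_of_tendsto_atBot hlim h0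
      refine ⟨w k - ℓ k • linInterpSlope ℓ w k, _, hslope k (Ioc_subset_Icc_self hk), ?_⟩
      filter_upwards [Icc_mem_nhdsLE hk.1] with m hm
      exact hpiece k m ⟨hm.1, hm.2.trans hk.2⟩
  · rcases le_or_gt (ℓ 0) t with h0 | h0
    · refine ⟨w 0, 0, by simpa using hε, ?_⟩
      filter_upwards [self_mem_nhdsWithin] with m hm
      simp [linInterp_of_le (h0.trans hm)]
    · obtain ⟨k, hk⟩ := exists_mem_Ico_of_tendsto_atBot hlim h0
      refine ⟨w k - ℓ k • linInterpSlope ℓ w k, _, hslope k (Ico_subset_Icc_self hk), ?_⟩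
      filter_upwards [Icc_mem_nhdsGE hk.2] with m hm
      exact hpiece k m ⟨hk.1.trans hm.1, hm.2⟩

variable (hw : ∀ k, ‖w k‖ ≤ T) (hgap : ∀ k, ℓ (k + 1) + (k + 1) * (2 * T + 1) ≤ ℓ k)
include hw hgap

lemma norm_linInterp_le (t : ℝ) : ‖linInterp ℓ w t‖ ≤ T := by
  have hstep := succ_add_one_le_of_gap ((norm_nonneg _).trans (hw 0)) hgap
  have hℓ : ∀ k, ℓ (k + 1) < ℓ k := fun k => by linarith [hstep k]
  rcases le_or_gt (ℓ 0) t with h0 | h0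
  · rw [linInterp_of_le h0]
    exact hw 0
  · obtain ⟨k, hk⟩ := exists_mem_Ico_of_tendsto_atBot (tendsto_atBot_of_succ_add_one_le hstep) h0
    rw [linInterp_eq_piece hℓ (Ico_subset_Icc_self hk)]
    exact norm_linInterpPiece_le hw (hℓ k) (Ico_subset_Icc_self hk)

lemma lipschitzWith_linInterp : LipschitzWith 1 (linInterp ℓ w) := by
  have hstep := succ_add_one_le_of_gap ((norm_nonneg _).trans (hw 0)) hgap
  refine lipschitzWith_of_forall_locallyAffineAt fun t =>
    locallyAffineAt_linInterp (fun k => by linarith [hstep k])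
      (tendsto_atBot_of_succ_add_one_le hstep) zero_le_one fun k _ => ?_
  refine (norm_linInterpSlope_le hw hgap k).trans ?_
  rw [NNReal.coe_one, div_le_one (by positivity)]
  simp

lemma eventually_locallyAffineAt_linInterp {ε : ℝ} (hε : 0 < ε) :
    ∀ᶠ t in atBot, LocallyAffineAt (linInterp ℓ w) ε t := by
  have hstep := succ_add_one_le_of_gap ((norm_nonneg _).trans (hw 0)) hgap
  have hanti : Antitone ℓ := antitone_nat_of_succ_le fun k => by linarith [hstep k]
  obtain ⟨N, hN⟩ := exists_nat_one_div_lt hε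
  filter_upwards [eventually_lt_atBot (ℓ N)] with t ht
  refine locallyAffineAt_linInterp (fun k => by linarith [hstep k])
    (tendsto_atBot_of_succ_add_one_le hstep) hε.le fun k hk => ?_
  have hNk : N ≤ k := by
    by_contra! hkN
    exact absurd ((hanti (Nat.succ_le_of_lt hkN)).trans hk.1) (not_le.2 ht)
  refine ((norm_linInterpSlope_le hw hgap k).trans ?_).trans hN.le
  gcongr

end LinInterp

lemma abs_exp_mul_le {σ : ℝ} (h : Real.exp σ ≤ 2) : |Real.exp σ * σ| ≤ 2 * |Real.exp σ - 1| := by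
  have hpos := Real.exp_pos σ
  have hup : Real.exp σ * σ ≤ Real.exp σ * (Real.exp σ - 1) :=
    mul_le_mul_of_nonneg_left (by linarith [Real.add_one_le_exp σ]) hpos.le
  have hlow : Real.exp σ - 1 ≤ Real.exp σ * σ := by
    have := mul_le_mul_of_nonneg_left (Real.add_one_le_exp (-σ)) hpos.le
    rw [← Real.exp_add, add_neg_cancel, Real.exp_zero] at this
    linarith
  rcases le_total 0 σ with hσ | hσ
  · have : 1 ≤ Real.exp σ := Real.one_le_exp hσ
    rw [abs_of_nonneg (mul_nonneg hpos.le hσ), abs_of_nonneg (by linarith)]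
    nlinarith
  · have : Real.exp σ ≤ 1 := Real.exp_le_one_iff.2 hσ
    rw [abs_of_nonpos (mul_nonpos_of_nonneg_of_nonpos hpos.le hσ), abs_of_nonpos (by linarith)]
    linarith

lemma norm_smul_add_norm_le {v : X} {w b : Y} {β κ μ : ℝ} (hb : ‖b‖ ≤ β)
    (hμ : |μ| ≤ 2 * |κ| * ‖v‖) :
    ‖κ • v‖ + ‖κ • w + μ • b‖ ≤ |κ| * (‖v‖ + ‖w‖ + 2 * ‖v‖ * β) := by
  have hμb : |μ| * ‖b‖ ≤ 2 * |κ| * ‖v‖ * β := mul_le_mul hμ hb (norm_nonneg _) (by positivity)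
  have := norm_add_le (κ • w) (μ • b)
  rw [norm_smul, norm_smul, Real.norm_eq_abs, Real.norm_eq_abs] at this
  rw [norm_smul, Real.norm_eq_abs]
  linarith

lemma mul_le_of_normal_ineq {p : (X →L[ℝ] ℝ) × (Y →L[ℝ] ℝ)} (hp : ‖p.2‖ ≤ 1) {v : X}
    {w b : Y} {δ β κ μ : ℝ} (hδ : 0 ≤ δ) (hb : ‖b‖ ≤ β) (hμ : |μ| ≤ 2 * |κ| * ‖v‖)
    (h : p.1 (κ • v) + p.2 (κ • w + μ • b) ≤ (δ + δ) * (‖κ • v‖ + ‖κ • w + μ • b‖)) :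
    κ * (p.1 v + p.2 w) ≤ |κ| * (2 * δ * (‖v‖ + ‖w‖ + 2 * ‖v‖ * β) + 2 * ‖v‖ * β) := by
  have hpb : |p.2 b| ≤ β :=
    calc |p.2 b| = ‖p.2 b‖ := (Real.norm_eq_abs _).symm
      _ ≤ ‖p.2‖ * ‖b‖ := p.2.le_opNorm b
      _ ≤ 1 * β := mul_le_mul hp hb (norm_nonneg _) zero_le_one
      _ = β := one_mul β
  have hμb : |μ * p.2 b| ≤ 2 * |κ| * ‖v‖ * β := by
    rw [abs_mul]
    exact mul_le_mul hμ hpb (abs_nonneg _) (by positivity)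
  have hlin : p.1 (κ • v) + p.2 (κ • w + μ • b) = κ * (p.1 v + p.2 w) + μ * p.2 b := by
    simp only [map_smul, map_add, smul_eq_mul]
    ring
  have hnorm := mul_le_mul_of_nonneg_left (norm_smul_add_norm_le (w := w) hb hμ)
    (by linarith : 0 ≤ δ + δ)
  linarith [neg_abs_le (μ * p.2 b)]

section LogRadial

variable {xb x : X} {U : ℝ → Y} {δ β : ℝ} {p : (X →L[ℝ] ℝ) × (Y →L[ℝ] ℝ)}

noncomputable def logRadial (xb : X) (U : ℝ → Y) (x : X) : Y :=
  ‖x - xb‖ • U (Real.log ‖x - xb‖)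

section

omit [NormedSpace ℝ X]

@[simp] lemma logRadial_self : logRadial xb U xb = 0 := by
  simp [logRadial]

lemma norm_logRadial_le {T : ℝ} (hU : ∀ t, ‖U t‖ ≤ T) (x : X) :
    ‖logRadial xb U x‖ ≤ T * ‖x - xb‖ := by
  rw [logRadial, norm_smul, norm_norm, mul_comm]
  exact mul_le_mul_of_nonneg_right (hU _) (norm_nonneg _)

lemma clmMod_logRadial_le {T : ℝ≥0} (hU : ∀ t, ‖U t‖ ≤ T) : clmMod (logRadial xb U) xb ≤ T :=
  clmMod_le_of_norm_le logRadial_self (norm_logRadial_le hU)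

lemma norm_smul_comp_log_sub_le {T : ℝ} (hU : ∀ t, ‖U t‖ ≤ T) (hUL : LipschitzWith 1 U)
    {ρ₁ ρ₂ : ℝ} (h₂ : 0 ≤ ρ₂) (h₁₂ : ρ₂ ≤ ρ₁) :
    ‖ρ₁ • U (Real.log ρ₁) - ρ₂ • U (Real.log ρ₂)‖ ≤ (T + 1) * (ρ₁ - ρ₂) := by
  have hlog : ρ₂ * ‖U (Real.log ρ₁) - U (Real.log ρ₂)‖ ≤ ρ₁ - ρ₂ := by
    rcases h₂.eq_or_lt with rfl | h₂
    · simpa using h₁₂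
    calc ρ₂ * ‖U (Real.log ρ₁) - U (Real.log ρ₂)‖ ≤ ρ₂ * (Real.log ρ₁ - Real.log ρ₂) := by
          gcongr
          have := hUL.dist_le_mul (Real.log ρ₁) (Real.log ρ₂)
          rwa [dist_eq_norm, Real.dist_eq, NNReal.coe_one, one_mul,
            abs_of_nonneg (sub_nonneg.2 (Real.log_le_log h₂ h₁₂))] at this
      _ = ρ₂ * Real.log (ρ₁ / ρ₂) := by rw [Real.log_div (by linarith) h₂.ne']
      _ ≤ ρ₂ * (ρ₁ / ρ₂ - 1) := by
          gcongr
          exact Real.log_le_sub_one_of_pos (div_pos (by linarith) h₂)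
      _ = ρ₁ - ρ₂ := by field_simp
  have hfirst : ‖(ρ₁ - ρ₂) • U (Real.log ρ₁)‖ ≤ (ρ₁ - ρ₂) * T := by
    rw [norm_smul, Real.norm_of_nonneg (by linarith)]
    exact mul_le_mul_of_nonneg_left (hU _) (by linarith)
  have hsecond : ‖ρ₂ • (U (Real.log ρ₁) - U (Real.log ρ₂))‖ ≤ ρ₁ - ρ₂ := by
    rwa [norm_smul, Real.norm_of_nonneg h₂]
  calc ‖ρ₁ • U (Real.log ρ₁) - ρ₂ • U (Real.log ρ₂)‖
        = ‖(ρ₁ - ρ₂) • U (Real.log ρ₁) + ρ₂ • (U (Real.log ρ₁) - U (Real.log ρ₂))‖ := by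
          congr 1
          module
    _ ≤ (ρ₁ - ρ₂) * T + (ρ₁ - ρ₂) := (norm_add_le _ _).trans (add_le_add hfirst hsecond)
    _ = (T + 1) * (ρ₁ - ρ₂) := by ring

lemma lipschitzWith_logRadial {T : ℝ≥0} (hU : ∀ t, ‖U t‖ ≤ T) (hUL : LipschitzWith 1 U) :
    LipschitzWith (T + 1) (logRadial xb U) := by
  refine LipschitzWith.of_dist_le_mul fun z₁ z₂ => ?_
  wlog h : ‖z₂ - xb‖ ≤ ‖z₁ - xb‖ generalizing z₁ z₂
  · rw [dist_comm, dist_comm z₁]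
    exact this z₂ z₁ (le_of_not_ge h)
  rw [dist_eq_norm, dist_eq_norm, NNReal.coe_add, NNReal.coe_one]
  calc ‖logRadial xb U z₁ - logRadial xb U z₂‖ ≤ (T + 1) * (‖z₁ - xb‖ - ‖z₂ - xb‖) :=
        norm_smul_comp_log_sub_le hU hUL (norm_nonneg _) h
    _ ≤ (T + 1) * ‖z₁ - z₂‖ := by
        gcongr
        simpa using norm_sub_norm_le (z₁ - xb) (z₂ - xb)

lemma firmlyCalm_logRadial {T : ℝ≥0} (hU : ∀ t, ‖U t‖ ≤ T) (hUL : LipschitzWith 1 U) :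
    FirmlyCalm (logRadial xb U) xb :=
  ⟨(clmMod_logRadial_le hU).trans_lt ENNReal.coe_lt_top, 1, one_pos,
    fun _ _ _ => ⟨T + 1, 1, one_pos, (lipschitzWith_logRadial hU hUL).lipschitzOnWith⟩⟩

end

lemma logRadial_add_smul_sub (hx : x ≠ xb) {σ : ℝ} {a b : Y}
    (ht : U (Real.log ‖x - xb‖) = a + Real.log ‖x - xb‖ • b)
    (hσ : U (Real.log ‖x - xb‖ + σ) = a + (Real.log ‖x - xb‖ + σ) • b) :
    logRadial xb U (x + (Real.exp σ - 1) • (x - xb)) - logRadial xb U x =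
      (Real.exp σ - 1) • logRadial xb U x + (‖x - xb‖ * (Real.exp σ * σ)) • b := by
  have hr : 0 < ‖x - xb‖ := norm_pos_iff.2 (sub_ne_zero.2 hx)
  have hu : x + (Real.exp σ - 1) • (x - xb) - xb = Real.exp σ • (x - xb) := by module
  have hnorm : ‖Real.exp σ • (x - xb)‖ = Real.exp σ * ‖x - xb‖ := by
    rw [norm_smul, Real.norm_of_nonneg (Real.exp_pos σ).le]
  have hlog : Real.log (Real.exp σ * ‖x - xb‖) = Real.log ‖x - xb‖ + σ := by
    rw [Real.log_mul (Real.exp_pos σ).ne' hr.ne', Real.log_exp, add_comm]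
  simp only [logRadial, hu, hnorm, hlog, hσ, ht]
  module

lemma eventually_mul_le_of_mem_graphEpsNormal (hx : x ≠ xb) (hδ : 0 < δ)
    (hp : p ∈ graphEpsNormal δ (logRadial xb U) x) (hp2 : ‖p.2‖ ≤ 1) :
    ∀ᶠ σ in 𝓝 (0:ℝ), ∀ a b : Y, ‖b‖ ≤ β → U (Real.log ‖x - xb‖) = a + Real.log ‖x - xb‖ • b →
      U (Real.log ‖x - xb‖ + σ) = a + (Real.log ‖x - xb‖ + σ) • b →
      (Real.exp σ - 1) * (p.1 (x - xb) + p.2 (logRadial xb U x)) ≤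
        |Real.exp σ - 1| * (2 * δ * (‖x - xb‖ + ‖logRadial xb U x‖ + 2 * ‖x - xb‖ * β) +
          2 * ‖x - xb‖ * β) := by
  obtain ⟨ρ, hρ, hnormal⟩ := hp δ hδ
  have hsmall : ∀ᶠ σ in 𝓝 (0:ℝ),
      |Real.exp σ - 1| * (‖x - xb‖ + ‖logRadial xb U x‖ + 2 * ‖x - xb‖ * β) < ρ :=
    ContinuousAt.eventually_lt (by fun_prop) continuousAt_const (by simpa using hρ)
  have htwo : ∀ᶠ σ in 𝓝 (0:ℝ), Real.exp σ < 2 :=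
    Real.continuous_exp.continuousAt.eventually_lt continuousAt_const (by norm_num)
  filter_upwards [hsmall, htwo] with σ hσρ hσ2 a b hb ht hσ
  have hμ : |‖x - xb‖ * (Real.exp σ * σ)| ≤ 2 * |Real.exp σ - 1| * ‖x - xb‖ := by
    rw [abs_mul, abs_norm]
    nlinarith [abs_exp_mul_le hσ2.le, norm_nonneg (x - xb)]
  have hray := logRadial_add_smul_sub hx ht hσ
  have hin := hnormal (x + (Real.exp σ - 1) • (x - xb)) (by
    rw [add_sub_cancel_left, hray]
    exact (norm_smul_add_norm_le hb hμ).trans_lt hσρ)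
  rw [add_sub_cancel_left, hray] at hin
  exact mul_le_of_normal_ineq hp2 hδ.le hb hμ hin

lemma abs_apply_le_of_locallyAffineAt (hx : x ≠ xb) (hδ : 0 < δ)
    (hp : p ∈ graphEpsNormal δ (logRadial xb U) x) (hp2 : ‖p.2‖ ≤ 1)
    (hU : LocallyAffineAt U β (Real.log ‖x - xb‖)) :
    |p.1 (x - xb) + p.2 (logRadial xb U x)| ≤
      2 * δ * (‖x - xb‖ + ‖logRadial xb U x‖ + 2 * ‖x - xb‖ * β) + 2 * ‖x - xb‖ * β := by
  set t := Real.log ‖x - xb‖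
  obtain ⟨⟨aL, bL, hbL, hL⟩, aR, bR, hbR, hR⟩ := hU
  obtain ⟨l, hl, hlt⟩ := mem_nhdsLE_iff_exists_Icc_subset.1 hL
  obtain ⟨u, hu, hut⟩ := mem_nhdsGE_iff_exists_Icc_subset.1 hR
  have hE := eventually_mul_le_of_mem_graphEpsNormal (β := β) hx hδ hp hp2
  have hE' := (continuous_neg.tendsto' (0:ℝ) 0 neg_zero).eventually hE
  obtain ⟨σ, ⟨⟨⟨hσu, hσl⟩, hEσ⟩, hEσ'⟩, hσ⟩ :=
    (((((eventually_lt_nhds (sub_pos.2 hu)).and (eventually_lt_nhds (sub_pos.2 hl))).and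
      hE).and hE').filter_mono nhdsWithin_le_nhds |>.and self_mem_nhdsWithin).exists
      (f := 𝓝[>] (0:ℝ))
  have hσ : 0 < σ := hσ
  have hR' := hEσ aR bR hbR (hut ⟨le_rfl, hu.le⟩) (hut ⟨by linarith, by linarith⟩)
  have hL' := hEσ' aL bL hbL (hlt ⟨hl.le, le_rfl⟩) (hlt ⟨by linarith, by linarith⟩)
  have he : 0 < Real.exp σ - 1 := by linarith [Real.add_one_lt_exp hσ.ne']
  have he' : Real.exp (-σ) - 1 < 0 := by
    linarith [Real.exp_lt_exp.2 (neg_lt_zero.2 hσ), Real.exp_zero]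
  set A := p.1 (x - xb) + p.2 (logRadial xb U x)
  set K := 2 * δ * (‖x - xb‖ + ‖logRadial xb U x‖ + 2 * ‖x - xb‖ * β) + 2 * ‖x - xb‖ * β
  rw [abs_of_pos he] at hR'
  rw [abs_of_neg he'] at hL'
  have hL'' : (1 - Real.exp (-σ)) * -A ≤ (1 - Real.exp (-σ)) * K := by linarith
  rw [abs_le]
  exact ⟨by linarith [le_of_mul_le_mul_left hL'' (by linarith)], le_of_mul_le_mul_left hR' he⟩

theorem semismoothStarFun_logRadial (hU : ∀ ε > 0, ∀ᶠ t in atBot, LocallyAffineAt U ε t) :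
    SemismoothStarFun (logRadial xb U) xb := by
  intro ε hε
  obtain ⟨t₀, ht₀⟩ := eventually_atBot.1 (hU (min (ε / 8) (1 / 2)) (by positivity))
  refine ⟨min (ε / 8) (Real.exp t₀), by positivity, fun x hx p hp hmax => ?_⟩
  rw [logRadial_self, sub_zero] at hx ⊢
  rcases eq_or_ne x xb with rfl | hne
  · simp
  have hr : ‖x - xb‖ < Real.exp t₀ := by
    linarith [norm_nonneg (logRadial xb U x), min_le_right (ε / 8) (Real.exp t₀)]
  have hlog : Real.log ‖x - xb‖ ≤ t₀ :=
    (Real.log_le_iff_le_exp (norm_pos_iff.2 (sub_ne_zero.2 hne))).2 hr.le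
  refine (abs_apply_le_of_locallyAffineAt hne (by positivity) hp
    (hmax ▸ le_max_right _ _) (ht₀ _ hlog)).trans ?_
  have hδ := min_le_left (ε / 8) (Real.exp t₀)
  have hβ := min_le_left (ε / 8) (1 / 2 : ℝ)
  have hβ' := min_le_right (ε / 8) (1 / 2 : ℝ)
  set r := ‖x - xb‖
  set F := ‖logRadial xb U x‖
  have hr0 : 0 ≤ r := norm_nonneg _
  have hF0 : 0 ≤ F := norm_nonneg _
  have h₁ : r + F + 2 * r * min (ε / 8) (1 / 2) ≤ 2 * r + F := by nlinarith
  have h₂ : 2 * min (ε / 8) (Real.exp t₀) * (r + F + 2 * r * min (ε / 8) (1 / 2)) ≤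
      2 * (ε / 8) * (2 * r + F) := by
    gcongr
  have h₃ : 2 * r * min (ε / 8) (1 / 2) ≤ 2 * r * (ε / 8) := by gcongr
  nlinarith

end LogRadial

theorem exists_perturbation_not_stronglySubregular {F : X → Set Y} {xb : X} {yb : Y}
    (h : yb ∈ F xb) {c : ℝ≥0} (hc : srgMod F xb yb < c) :
    ∃ f : X → Y, FirmlyCalm f xb ∧ SemismoothStarFun f xb ∧ f xb = 0 ∧
      ¬ StronglySubregular (addFun F f) xb yb ∧ clmMod f xb ≤ c := by
  -- gaps `(k + 1) * (2 * c + 1)` between the scales bound the slopes of `U` by `1 / (k + 1)`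
  obtain ⟨x, hx, hdecay⟩ := exists_seq_norm_sub_lt_mul
    (frequently_exists_dist_lt_of_srgMod_lt h hc)
    (g := fun k => Real.exp (-((k + 1) * (2 * c + 1)))) fun _ => Real.exp_pos _
  choose y hyF hy using fun k => (hx k).2
  have hpos : ∀ k, 0 < ‖x k - xb‖ := fun k => norm_pos_iff.2 (sub_ne_zero.2 (hx k).1)
  set ℓ : ℕ → ℝ := fun k => Real.log ‖x k - xb‖ with hℓ
  set w : ℕ → Y := fun k => ‖x k - xb‖⁻¹ • (yb - y k) with hw
  have hwc : ∀ k, ‖w k‖ ≤ c := fun k => by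
    have := hy k
    rw [dist_eq_norm, dist_eq_norm] at this
    rw [hw, norm_smul, norm_inv, norm_norm, inv_mul_le_iff₀ (hpos k), mul_comm]
    exact this.le
  have hgap : ∀ k, ℓ (k + 1) + (k + 1) * (2 * c + 1) ≤ ℓ k := fun k => by
    have := Real.log_lt_log (hpos _) (hdecay k)
    rw [Real.log_mul (Real.exp_pos _).ne' (hpos k).ne', Real.log_exp] at this
    simp only [hℓ]
    linarith
  have hstep := succ_add_one_le_of_gap c.coe_nonneg hgap
  have hfx : ∀ k, logRadial xb (linInterp ℓ w) (x k) = yb - y k := fun k => by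
    have hk := linInterp_apply_nat (ℓ := ℓ) (w := w) (fun k => by linarith [hstep k]) k
    rw [logRadial, show Real.log ‖x k - xb‖ = ℓ k from rfl, hk, hw, smul_inv_smul₀ (hpos k).ne']
  have hlim : Tendsto x atTop (𝓝 xb) := by
    rw [tendsto_iff_norm_sub_tendsto_zero]
    have hexp : (fun k => ‖x k - xb‖) = fun k => Real.exp (ℓ k) :=
      funext fun k => (Real.exp_log (hpos k)).symm
    rw [hexp]
    exact Real.tendsto_exp_atBot.comp (tendsto_atBot_of_succ_add_one_le hstep)
  refine ⟨logRadial xb (linInterp ℓ w),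
    firmlyCalm_logRadial (norm_linInterp_le hwc hgap) (lipschitzWith_linInterp hwc hgap),
    semismoothStarFun_logRadial fun _ => eventually_locallyAffineAt_linInterp hwc hgap,
    logRadial_self, not_stronglySubregular_of_tendsto (fun k => ?_) (fun k => (hx k).1) hlim,
    clmMod_logRadial_le (norm_linInterp_le hwc hgap)⟩
  show yb - logRadial xb (linInterp ℓ w) (x k) ∈ F (x k)
  rw [hfx, _root_.sub_sub_cancel]
  exact hyF k

lemma radsSR_le_srgMod {F : X → Set Y} {xb : X} {yb : Y} (h : yb ∈ F xb) {P : (X → Y) → Prop}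
    (hP : ∀ f, FirmlyCalm f xb → SemismoothStarFun f xb → P f) :
    radsSR P F xb yb ≤ srgMod F xb yb := by
  refine le_of_forall_gt_imp_ge_of_dense fun c hc => ?_
  rcases eq_or_ne c ⊤ with rfl | hctop
  · exact le_top
  lift c to ℝ≥0 using hctop
  obtain ⟨f, hfirm, hsemi, hf0, hnss, hclm⟩ := exists_perturbation_not_stronglySubregular h hc
  exact (sInf_le ⟨f, hP f hfirm hsemi, hf0, hnss, rfl⟩ : radsSR P F xb yb ≤ clmMod f xb).trans hclm

theorem radsSR_eq_srgMod_general
    (F : X → Set Y) (xb : X) (yb : Y) (h : yb ∈ F xb)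
    (hss : StronglySubregular F xb yb) :
    radsSR (fun f => Calm f xb) F xb yb = srgMod F xb yb ∧
    radsSR (fun f => FirmlyCalm f xb) F xb yb = srgMod F xb yb ∧
    radsSR (fun f => FirmlyCalm f xb ∧ SemismoothStarFun f xb) F xb yb
      = srgMod F xb yb := by
  have hle := srgMod_le_radsSR h hss.2
  exact ⟨(radsSR_le_srgMod h fun _ hf _ => hf.1).antisymm (hle _),
    (radsSR_le_srgMod h fun _ hf _ => hf).antisymm (hle _),
    (radsSR_le_srgMod h fun _ hf hs => ⟨hf, hs⟩).antisymm (hle _)⟩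

/-- Theorem 5.9: if `F` is strongly subregular at `(xb, yb)`, then the radius of strong
subregularity over calm, firmly calm, and firmly calm semismooth* perturbations all
equal the subregularity modulus. -/
theorem radsSR_eq_srgMod [CompleteSpace X] [CompleteSpace Y]
    (F : X → Set Y) (xb : X) (yb : Y) (h : yb ∈ F xb)
    (hss : StronglySubregular F xb yb) :
    radsSR (fun f => Calm f xb) F xb yb = srgMod F xb yb ∧
    radsSR (fun f => FirmlyCalm f xb) F xb yb = srgMod F xb yb ∧
    radsSR (fun f => FirmlyCalm f xb ∧ SemismoothStarFun f xb) F xb yb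
      = srgMod F xb yb :=
  radsSR_eq_srgMod_general F xb yb h hss
end
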